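/- arXiv:1305.5879 — 4 statements merged into one kernel-verified Lean document; each statement's English description precedes it below -/
import Mathlib

section
/- For a one-dimensional Gaussian N(0, λ), among all splits of the real line into (−∞, c] and (c, ∞), the within-cluster sum of squares W(c) = E[(X − m₁(c))² 1{X≤c}] + E[(X − m₂(c))² 1{X>c}] (where m₁(c), m₂(c) are the conditional means on the two pieces) is minimized at c = 0, with minimum value λ(1 − 2/π). -/
namespace GOS
open MeasureTheory ProbabilityTheory Real Filter Set Topology
variable {v : NNReal} (hv : 0 < v)

noncomputable def f (v : NNReal) (x : ℝ) : ℝ := gaussianPDFReal 0 v x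

lemma f_eq (x : ℝ) : f v x = (Real.sqrt (2 * π * v))⁻¹ * rexp (-x ^ 2 / (2 * v)) := by
  simp [f, gaussianPDFReal]

lemma f_cont : Continuous (f v) := by
  rw [funext fun x => f_eq (v := v) x]
  fun_prop

include hv

lemma f_eq' (x : ℝ) : f v x = (Real.sqrt (2 * π * v))⁻¹ * rexp (-((2 * (v:ℝ))⁻¹ * x ^ 2)) := by
  have hV : (0:ℝ) < v := hv
  rw [f_eq]
  congr 1
  rw [neg_div]
  congr 1
  field_simp

lemma int_xf : Integrable (fun x => x * f v x) := by
  have hV : (0:ℝ) < v := hv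
  have hb : (0:ℝ) < (2 * (v:ℝ))⁻¹ := by positivity
  have := (integrable_mul_exp_neg_mul_sq hb).const_mul (Real.sqrt (2 * π * v))⁻¹
  refine this.congr ?_
  filter_upwards with x
  rw [f_eq' hv]
  ring

lemma int_x2f : Integrable (fun x => x ^ 2 * f v x) := by
  have hV : (0:ℝ) < v := hv
  set b : ℝ := (2 * (v:ℝ))⁻¹ with hbdef
  have hb : (0:ℝ) < b := by positivity
  have hb2 : (0:ℝ) < b / 2 := by positivity
  have hg : Integrable (fun x : ℝ => ((Real.sqrt (2 * π * v))⁻¹ * (2 / b)) * rexp (-(b/2) * x ^ 2)) :=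
    (integrable_exp_neg_mul_sq hb2).const_mul _
  refine hg.mono' ((continuous_pow 2).mul (f_cont (v := v))).aestronglyMeasurable ?_
  filter_upwards with x
  have h1 : x ^ 2 * rexp (-(b/2) * x ^ 2) ≤ 2 / b := by
    have h2 : (b/2) * x ^ 2 ≤ rexp ((b/2) * x ^ 2) := (Real.add_one_le_exp _).trans' (by nlinarith)
    rw [show -(b/2) * x^2 = -(b/2 * x^2) by ring, Real.exp_neg]
    rw [mul_inv_le_iff₀ (Real.exp_pos _)]
    calc x ^ 2 = (2/b) * ((b/2) * x ^2) := by field_simp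
    _ ≤ 2 / b * rexp ((b/2) * x^2) := by
        apply mul_le_mul_of_nonneg_left h2 (by positivity)
  have hfx : 0 < f v x := gaussianPDFReal_pos 0 v x hv.ne'
  rw [Real.norm_eq_abs, abs_of_nonneg (by positivity)]
  rw [f_eq' hv]
  have : rexp (-(b * x ^ 2)) = rexp (-(b/2) * x^2) * rexp (-(b/2) * x^2) := by
    rw [← Real.exp_add]; ring_nf
  rw [this]
  have hx2 : x ^ 2 * rexp (-(b/2)*x^2) ≤ 2 / b := h1
  calc x ^ 2 * ((Real.sqrt (2 * π * v))⁻¹ * (rexp (-(b/2) * x^2) * rexp (-(b/2) * x^2)))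
      = (Real.sqrt (2 * π * v))⁻¹ * (x ^ 2 * rexp (-(b/2) * x^2)) * rexp (-(b/2) * x^2) := by ring
    _ ≤ (Real.sqrt (2 * π * v))⁻¹ * (2 / b) * rexp (-(b/2) * x^2) := by
        have : (0:ℝ) ≤ (Real.sqrt (2 * π * v))⁻¹ := by positivity
        have := mul_le_mul_of_nonneg_left hx2 this
        exact mul_le_mul_of_nonneg_right this (Real.exp_nonneg _)

lemma f_tendsto_atTop : Tendsto (f v) atTop (nhds 0) := by
  rw [funext fun x => f_eq (v := v) x]
  rw [show (0:ℝ) = (Real.sqrt (2 * π * v))⁻¹ * 0 by ring]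
  apply Tendsto.const_mul
  apply Real.tendsto_exp_atBot.comp
  have hV : (0:ℝ) < v := hv
  apply Tendsto.atBot_div_const (by positivity)
  exact tendsto_neg_atTop_atBot.comp (tendsto_pow_atTop (by norm_num))

omit hv in
lemma f_neg (x : ℝ) : f v (-x) = f v x := by
  rw [f_eq, f_eq, neg_sq]

lemma f_tendsto_atBot : Tendsto (f v) atBot (nhds 0) := by
  have h := (f_tendsto_atTop hv).comp tendsto_neg_atBot_atTop
  exact h.congr fun x => f_neg x

noncomputable def Φ (v : NNReal) (c : ℝ) : ℝ := ∫ x in Iic c, f v x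
noncomputable def Ψ (v : NNReal) (c : ℝ) : ℝ := ∫ x in Ioi c, f v x

omit hv in
lemma f_int : Integrable (f v) := integrable_gaussianPDFReal 0 v

include hv
lemma f_total : ∫ x, f v x = 1 := integral_gaussianPDFReal_eq_one 0 hv.ne'

lemma f_pos (x : ℝ) : 0 < f v x := gaussianPDFReal_pos 0 v x hv.ne'

lemma hasDerivAt_f (x : ℝ) : HasDerivAt (f v) (-x / v * f v x) x := by
  have hV : (0:ℝ) < v := hv
  have h1 : HasDerivAt (fun x : ℝ => -x ^ 2 / (2 * v)) (-x / v) x := by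
    have : HasDerivAt (fun x : ℝ => -x ^ 2 / (2 * v)) (-(2 * x ^ 1) / (2 * v)) x :=
      ((hasDerivAt_pow 2 x).neg).div_const _
    convert this using 1
    field_simp
  have h2 := (h1.exp).const_mul (Real.sqrt (2 * π * v))⁻¹
  rw [funext fun y => (f_eq (v := v) y).symm] at h2
  refine h2.congr_deriv ?_
  rw [f_eq]
  ring

lemma f_eq'' (x : ℝ) : f v x = (Real.sqrt (2 * π * v))⁻¹ * rexp (-((2 * (v:ℝ))⁻¹ * x ^ 2)) :=
  f_eq' hv x

lemma meas_Iic (c : ℝ) : ((gaussianReal 0 v) (Iic c)).toReal = Φ v c := by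
  rw [gaussianReal_apply_eq_integral 0 hv.ne',
    ENNReal.toReal_ofReal (integral_nonneg fun x => gaussianPDFReal_nonneg 0 v x)]
  rfl

lemma meas_Ioi (c : ℝ) : ((gaussianReal 0 v) (Ioi c)).toReal = Ψ v c := by
  rw [gaussianReal_apply_eq_integral 0 hv.ne',
    ENNReal.toReal_ofReal (integral_nonneg fun x => gaussianPDFReal_nonneg 0 v x)]
  rfl

omit hv
lemma PhiPsi (c : ℝ) : Φ v c + Ψ v c = ∫ x, f v x := by
  rw [Φ, Ψ, ← setIntegral_union (Iic_disjoint_Ioi le_rfl) measurableSet_Ioi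
    (f_int (v := v)).integrableOn (f_int (v := v)).integrableOn, Iic_union_Ioi,
    setIntegral_univ]
include hv

lemma PhiPsi' (c : ℝ) : Φ v c + Ψ v c = 1 := by rw [PhiPsi, f_total hv]

lemma Phi_pos (c : ℝ) : 0 < Φ v c := by
  rw [Φ, setIntegral_pos_iff_support_of_nonneg_ae
    (ae_of_all _ fun x => (f_pos hv x).le) (f_int (v := v)).integrableOn]
  have : Function.support (f v) = univ := by
    ext x; simp [Function.mem_support, (f_pos hv x).ne']
  rw [this, univ_inter, Real.volume_Iic]
  norm_num

lemma Psi_pos (c : ℝ) : 0 < Ψ v c := by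
  rw [Ψ, setIntegral_pos_iff_support_of_nonneg_ae
    (ae_of_all _ fun x => (f_pos hv x).le) (f_int (v := v)).integrableOn]
  have : Function.support (f v) = univ := by
    ext x; simp [Function.mem_support, (f_pos hv x).ne']
  rw [this, univ_inter, Real.volume_Ioi]
  norm_num

omit hv in
lemma hasDerivAt_Phi (c : ℝ) : HasDerivAt (Φ v) (f v c) c := by
  have key : ∀ u : ℝ, Φ v u = Φ v 0 + ∫ x in (0:ℝ)..u, f v x := by
    intro u
    have := intervalIntegral.integral_Iic_sub_Iic (f_int (v := v)).integrableOn (f_int (v := v)).integrableOn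
      (a := 0) (b := u)
    rw [Φ, Φ]
    linarith [this]
  have h : HasDerivAt (fun u => ∫ x in (0:ℝ)..u, f v x) (f v c) c :=
    intervalIntegral.integral_hasDerivAt_right ((f_cont (v := v)).intervalIntegrable _ _)
      ((f_cont (v := v)).stronglyMeasurableAtFilter _ _) (f_cont (v := v)).continuousAt
  have : Φ v = fun u => Φ v 0 + ∫ x in (0:ℝ)..u, f v x := funext key
  rw [this]
  exact h.const_add _

lemma Phi_zero : Φ v 0 = 1 / 2 := by
  have h1 : Φ v 0 = Ψ v 0 := by
    rw [Φ, Ψ]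
    have : ∫ x in Iic (0:ℝ), f v x = ∫ x in Iic (0:ℝ), f v (-x) := by
      refine setIntegral_congr_fun measurableSet_Iic fun x _ => (f_neg x).symm
    rw [this, integral_comp_neg_Iic, neg_zero]
  have h2 := PhiPsi' hv 0
  linarith

lemma Phi_tendsto_atTop : Tendsto (Φ v) atTop (nhds 1) := by
  have h := tendsto_measure_Iic_atTop (gaussianReal 0 v)
  have h2 : Tendsto (fun c => ((gaussianReal 0 v) (Iic c)).toReal) atTop (nhds 1) := by
    have : ((gaussianReal 0 v) univ).toReal = 1 := by simp
    rw [← this]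
    exact (ENNReal.tendsto_toReal (measure_ne_top _ _)).comp h
  exact h2.congr fun c => meas_Iic hv c

lemma meas_singleton (c : ℝ) : (gaussianReal 0 v) {c} = 0 := by
  rw [gaussianReal_apply_eq_integral 0 hv.ne']
  rw [show (∫ x in ({c} : Set ℝ), gaussianPDFReal 0 v x) = 0 from ?_]
  · simp
  · rw [Measure.restrict_eq_zero.mpr (by simp), integral_zero_measure]

lemma meas_Ici (c : ℝ) : ((gaussianReal 0 v) (Ici c)).toReal = Ψ v c := by
  rw [← meas_Ioi hv c]
  congr 1
  rw [← Ioi_union_left]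
  refine le_antisymm ?_ (measure_mono subset_union_left)
  calc (gaussianReal 0 v) (Ioi c ∪ {c}) ≤ (gaussianReal 0 v) (Ioi c) + (gaussianReal 0 v) {c} :=
        measure_union_le _ _
  _ = (gaussianReal 0 v) (Ioi c) := by rw [meas_singleton hv c, add_zero]

lemma Psi_tendsto_atBot : Tendsto (Ψ v) atBot (nhds 1) := by
  have h := tendsto_measure_Ici_atBot (gaussianReal 0 v)
  have h2 : Tendsto (fun c => ((gaussianReal 0 v) (Ici c)).toReal) atBot (nhds 1) := by
    have huniv : ((gaussianReal 0 v) univ).toReal = 1 := by simp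
    rw [← huniv]
    exact (ENNReal.tendsto_toReal (measure_ne_top _ _)).comp h
  exact h2.congr fun c => meas_Ici hv c

lemma Phi_tendsto_atBot : Tendsto (Φ v) atBot (nhds 0) := by
  have h := (tendsto_const_nhds (x := (1:ℝ)) (f := atBot)).sub (Psi_tendsto_atBot hv)
  rw [sub_self] at h
  exact h.congr fun c => by linarith [PhiPsi' hv c]

lemma Psi_tendsto_atTop : Tendsto (Ψ v) atTop (nhds 0) := by
  have h := (tendsto_const_nhds (x := (1:ℝ)) (f := atTop)).sub (Phi_tendsto_atTop hv)
  rw [sub_self] at h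
  exact h.congr fun c => by linarith [PhiPsi' hv c]

omit hv in
lemma hasDerivAt_Psi' (c : ℝ) (h1 : Φ v c + Ψ v c = 1) : True := trivial

lemma hasDerivAt_Psi (c : ℝ) : HasDerivAt (Ψ v) (-f v c) c := by
  have : Ψ v = fun c => 1 - Φ v c := funext fun c => by linarith [PhiPsi' hv c]
  rw [this]
  simpa using (hasDerivAt_Phi (v := v) c).const_sub 1


lemma xf_tendsto_atTop : Tendsto (fun x => x * f v x) atTop (nhds 0) := by
  have hV : (0:ℝ) < v := hv
  set C : ℝ := (Real.sqrt (2 * π * v))⁻¹ with hC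
  have hCpos : 0 < C := by rw [hC]; positivity
  set b : ℝ := (2 * (v:ℝ))⁻¹ with hb
  have hbpos : 0 < b := by rw [hb]; positivity
  have hupper : ∀ x : ℝ, 1 ≤ x → x * f v x ≤ (C / b) / x := by
    intro x hx
    have hxpos : 0 < x := by linarith
    rw [f_eq'' hv]
    have hexp : rexp (b * x ^ 2) ≥ b * x ^ 2 := (Real.add_one_le_exp _).trans' (by nlinarith)
    have h2 : rexp (-(b * x ^ 2)) ≤ (b * x ^ 2)⁻¹ := by
      rw [Real.exp_neg]
      exact inv_anti₀ (by positivity) hexp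
    calc x * (C * rexp (-(b * x ^ 2))) ≤ x * (C * (b * x ^ 2)⁻¹) := by
          apply mul_le_mul_of_nonneg_left (mul_le_mul_of_nonneg_left h2 hCpos.le) hxpos.le
      _ = (C / b) / x := by field_simp
  have hlower : ∀ x : ℝ, 1 ≤ x → 0 ≤ x * f v x := fun x hx => by
    have := f_pos hv x; nlinarith
  have htop : Tendsto (fun x : ℝ => (C / b) / x) atTop (nhds 0) :=
    Tendsto.div_atTop tendsto_const_nhds tendsto_id
  refine tendsto_of_tendsto_of_tendsto_of_le_of_le' tendsto_const_nhds htop ?_ ?_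
  · filter_upwards [eventually_ge_atTop (1:ℝ)] with x hx using hlower x hx
  · filter_upwards [eventually_ge_atTop (1:ℝ)] with x hx using hupper x hx

lemma xf_tendsto_atBot : Tendsto (fun x => x * f v x) atBot (nhds 0) := by
  have h := ((xf_tendsto_atTop hv).neg).comp tendsto_neg_atBot_atTop
  rw [neg_zero] at h
  refine h.congr fun x => ?_
  simp only [Function.comp_apply, f_neg (v := v)]
  ring

lemma tail_xf_Ioi (c : ℝ) : ∫ x in Ioi c, x * f v x = (v:ℝ) * f v c := by
  have hV : (0:ℝ) < v := hv
  have hderiv : ∀ x ∈ Ici c, HasDerivAt (fun y => -((v:ℝ) * f v y)) (x * f v x) x := by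
    intro x _
    have := ((hasDerivAt_f hv x).const_mul (v:ℝ)).neg
    refine this.congr_deriv ?_
    field_simp
  have hlim : Tendsto (fun y => -((v:ℝ) * f v y)) atTop (nhds 0) := by
    have := ((f_tendsto_atTop hv).const_mul (v:ℝ)).neg
    simpa using this
  have := integral_Ioi_of_hasDerivAt_of_tendsto' hderiv (int_xf hv).integrableOn hlim
  rw [this]; ring

lemma tail_xf_Iic (c : ℝ) : ∫ x in Iic c, x * f v x = -((v:ℝ) * f v c) := by
  have hV : (0:ℝ) < v := hv
  have hderiv : ∀ x ∈ Iic c, HasDerivAt (fun y => -((v:ℝ) * f v y)) (x * f v x) x := by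
    intro x _
    have := ((hasDerivAt_f hv x).const_mul (v:ℝ)).neg
    refine this.congr_deriv ?_
    field_simp
  have hlim : Tendsto (fun y => -((v:ℝ) * f v y)) atBot (nhds 0) := by
    have := ((f_tendsto_atBot hv).const_mul (v:ℝ)).neg
    simpa using this
  have := integral_Iic_of_hasDerivAt_of_tendsto' hderiv (int_xf hv).integrableOn hlim
  rw [this]; ring

lemma hasDerivAt_F2 (x : ℝ) :
    HasDerivAt (fun y => (v:ℝ) * Φ v y - (v:ℝ) * (y * f v y)) (x ^ 2 * f v x) x := by
  have hV : (0:ℝ) < v := hv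
  have h1 := (hasDerivAt_Phi (v := v) x).const_mul (v:ℝ)
  have h2 := (((hasDerivAt_id x).mul (hasDerivAt_f hv x)).const_mul (v:ℝ))
  have := h1.sub h2
  refine this.congr_deriv ?_
  simp only [id_eq]
  field_simp
  ring

lemma F2_tendsto_atBot :
    Tendsto (fun y => (v:ℝ) * Φ v y - (v:ℝ) * (y * f v y)) atBot (nhds 0) := by
  have := ((Phi_tendsto_atBot hv).const_mul (v:ℝ)).sub ((xf_tendsto_atBot hv).const_mul (v:ℝ))
  simpa using this

lemma F2_tendsto_atTop :
    Tendsto (fun y => (v:ℝ) * Φ v y - (v:ℝ) * (y * f v y)) atTop (nhds (v:ℝ)) := by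
  have := ((Phi_tendsto_atTop hv).const_mul (v:ℝ)).sub ((xf_tendsto_atTop hv).const_mul (v:ℝ))
  simpa using this

lemma tail_x2f_Iic (c : ℝ) :
    ∫ x in Iic c, x ^ 2 * f v x = (v:ℝ) * Φ v c - (v:ℝ) * (c * f v c) := by
  have := integral_Iic_of_hasDerivAt_of_tendsto' (a := c) (fun x _ => hasDerivAt_F2 hv x)
    (int_x2f hv).integrableOn (F2_tendsto_atBot hv)
  rw [this]; ring

lemma tail_x2f_Ioi (c : ℝ) :
    ∫ x in Ioi c, x ^ 2 * f v x = (v:ℝ) * Ψ v c + (v:ℝ) * (c * f v c) := by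
  have := integral_Ioi_of_hasDerivAt_of_tendsto' (a := c) (fun x _ => hasDerivAt_F2 hv x)
    (int_x2f hv).integrableOn (F2_tendsto_atTop hv)
  rw [this]
  have h := PhiPsi' hv c
  have : Ψ v c = 1 - Φ v c := by linarith
  rw [this]; ring

lemma nu_setIntegral {s : Set ℝ} (hs : MeasurableSet s) (g : ℝ → ℝ) :
    ∫ x in s, g x ∂(gaussianReal 0 v) = ∫ x in s, g x * f v x := by
  rw [gaussianReal_of_var_ne_zero 0 hv.ne']
  rw [restrict_withDensity hs]
  have : ∀ x, gaussianPDF 0 v x = ((gaussianPDFReal 0 v x).toNNReal : ENNReal) := by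
    intro x; rfl
  rw [funext this]
  rw [integral_withDensity_eq_integral_smul
    (by exact (measurable_gaussianPDFReal 0 v).real_toNNReal) g]
  refine setIntegral_congr_fun hs fun x _ => ?_
  simp only [NNReal.smul_def, smul_eq_mul]
  rw [Real.coe_toNNReal _ (gaussianPDFReal_nonneg 0 v x)]
  rw [mul_comm]; rfl


lemma expand_Iic (c m : ℝ) :
    ∫ x in Iic c, (x - m) ^ 2 * f v x
      = (∫ x in Iic c, x ^ 2 * f v x) - 2 * m * (∫ x in Iic c, x * f v x) + m ^ 2 * Φ v c := by
  have h1 : IntegrableOn (fun x => x ^ 2 * f v x) (Iic c) := (int_x2f hv).integrableOn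
  have h2 : IntegrableOn (fun x => 2 * m * (x * f v x)) (Iic c) :=
    (Integrable.const_mul (int_xf hv) _).integrableOn
  have h3 : IntegrableOn (fun x => m ^ 2 * f v x) (Iic c) :=
    (Integrable.const_mul (f_int (v := v)) _).integrableOn
  have hfun : (fun x => (x - m) ^ 2 * f v x)
      = fun x => (x ^ 2 * f v x - 2 * m * (x * f v x)) + m ^ 2 * f v x :=
    funext fun x => by ring
  have h12 : IntegrableOn (fun x => x ^ 2 * f v x - 2 * m * (x * f v x)) (Iic c) := h1.sub h2
  rw [Φ, hfun, integral_add h12 h3, integral_sub h1 h2, integral_const_mul,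
    integral_const_mul]

lemma expand_Ioi (c m : ℝ) :
    ∫ x in Ioi c, (x - m) ^ 2 * f v x
      = (∫ x in Ioi c, x ^ 2 * f v x) - 2 * m * (∫ x in Ioi c, x * f v x) + m ^ 2 * Ψ v c := by
  have h1 : IntegrableOn (fun x => x ^ 2 * f v x) (Ioi c) := (int_x2f hv).integrableOn
  have h2 : IntegrableOn (fun x => 2 * m * (x * f v x)) (Ioi c) :=
    (Integrable.const_mul (int_xf hv) _).integrableOn
  have h3 : IntegrableOn (fun x => m ^ 2 * f v x) (Ioi c) :=
    (Integrable.const_mul (f_int (v := v)) _).integrableOn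
  have hfun : (fun x => (x - m) ^ 2 * f v x)
      = fun x => (x ^ 2 * f v x - 2 * m * (x * f v x)) + m ^ 2 * f v x :=
    funext fun x => by ring
  have h12 : IntegrableOn (fun x => x ^ 2 * f v x - 2 * m * (x * f v x)) (Ioi c) := h1.sub h2
  rw [Ψ, hfun, integral_add h12 h3, integral_sub h1 h2, integral_const_mul,
    integral_const_mul]

lemma f_sq (c : ℝ) : f v c ^ 2 = (2 * π * (v:ℝ))⁻¹ * rexp (-c ^ 2 / (v:ℝ)) := by
  have hV : (0:ℝ) < v := hv
  rw [f_eq, mul_pow]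
  congr 1
  · rw [← Real.sqrt_inv, Real.sq_sqrt (by positivity)]
  · rw [sq, ← Real.exp_add]
    congr 1
    field_simp
    ring

noncomputable def kf (v : NNReal) (c : ℝ) : ℝ := Ψ v c - Φ v c + π * c * f v c
noncomputable def Df (v : NNReal) (c : ℝ) : ℝ := Φ v c * Ψ v c - rexp (-c ^ 2 / (v:ℝ)) / 4

lemma Psi_zero : Ψ v 0 = 1 / 2 := by have := PhiPsi' hv 0; have := Phi_zero hv; linarith

lemma kf_zero : kf v 0 = 0 := by
  rw [kf, Phi_zero hv, Psi_zero hv]; ring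

lemma Df_zero : Df v 0 = 0 := by
  rw [Df, Phi_zero hv, Psi_zero hv]; norm_num

omit hv in
lemma Phi_neg (c : ℝ) : Φ v (-c) = Ψ v c := by
  rw [Φ, Ψ]
  have : ∫ x in Ioi c, f v x = ∫ x in Ioi c, f v (-x) := by
    refine setIntegral_congr_fun measurableSet_Ioi fun x _ => (f_neg x).symm
  rw [this, integral_comp_neg_Ioi]

lemma Df_even (c : ℝ) : Df v (-c) = Df v c := by
  have h1 : Φ v (-c) = Ψ v c := Phi_neg c
  have h2 : Ψ v (-c) = Φ v c := by
    have := PhiPsi' hv (-c); have := PhiPsi' hv c; linarith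
  rw [Df, Df, h1, h2, neg_sq]
  ring

lemma hasDerivAt_exp_part (c : ℝ) :
    HasDerivAt (fun y : ℝ => rexp (-y ^ 2 / (v:ℝ)) / 4)
      ((- 2 * c / (v:ℝ)) * rexp (-c ^ 2 / (v:ℝ)) / 4) c := by
  have hV : (0:ℝ) < v := hv
  have h1 : HasDerivAt (fun y : ℝ => -y ^ 2 / (v:ℝ)) (-2 * c / (v:ℝ)) c := by
    have := ((hasDerivAt_pow 2 c).neg).div_const (v:ℝ)
    refine this.congr_deriv ?_
    push_cast; ring
  refine ((h1.exp).div_const 4).congr_deriv ?_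
  ring

lemma hasDerivAt_Df (c : ℝ) : HasDerivAt (Df v) (f v c * kf v c) c := by
  have hV : (0:ℝ) < v := hv
  have h1 := ((hasDerivAt_Phi (v := v) c).mul (hasDerivAt_Psi hv c)).sub
    (hasDerivAt_exp_part hv c)
  have heq : f v c * Ψ v c + Φ v c * -f v c - (-2 * c / (v:ℝ)) * rexp (-c ^ 2 / (v:ℝ)) / 4
      = f v c * kf v c := by
    have hsq := f_sq hv c
    have : rexp (-c ^ 2 / (v:ℝ)) = 2 * π * (v:ℝ) * f v c ^ 2 := by
      rw [hsq]; field_simp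
    rw [this, kf]
    field_simp
    ring
  rw [heq] at h1
  exact h1

lemma hasDerivAt_kf (c : ℝ) :
    HasDerivAt (kf v) (f v c * (π - 2 - π * c ^ 2 / (v:ℝ))) c := by
  have hV : (0:ℝ) < v := hv
  have h1 := ((hasDerivAt_Psi hv c).sub (hasDerivAt_Phi (v := v) c)).add
    ((((hasDerivAt_id c).mul (hasDerivAt_f hv c)).const_mul π))
  rw [show kf v = fun c => Ψ v c - Φ v c + π * (c * f v c) from funext fun c => by rw [kf]; ring]
  simp only [id_eq] at h1
  refine h1.congr_deriv ?_
  field_simp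
  ring

lemma Df_tendsto_atTop : Tendsto (Df v) atTop (nhds 0) := by
  have hV : (0:ℝ) < v := hv
  have h1 : Tendsto (fun c : ℝ => rexp (-c ^ 2 / (v:ℝ))) atTop (nhds 0) := by
    apply Real.tendsto_exp_atBot.comp
    apply Tendsto.atBot_div_const hV
    exact tendsto_neg_atTop_atBot.comp (tendsto_pow_atTop (by norm_num))
  have h2 := ((Phi_tendsto_atTop hv).mul (Psi_tendsto_atTop hv)).sub (h1.div_const 4)
  show Tendsto (fun c => Φ v c * Ψ v c - rexp (-c ^ 2 / (v:ℝ)) / 4) atTop (nhds 0)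
  simpa using h2

-- core inequality
lemma core (c : ℝ) : 0 ≤ Df v c := by
  have hV : (0:ℝ) < v := hv
  have hpi : (2:ℝ) < π := by linarith [Real.pi_gt_three]
  set a : ℝ := Real.sqrt ((v:ℝ) * (π - 2) / π) with ha
  have ha0 : 0 ≤ a := Real.sqrt_nonneg _
  have ha2 : a ^ 2 = (v:ℝ) * (π - 2) / π :=
    Real.sq_sqrt (div_nonneg (mul_nonneg hV.le (by linarith)) Real.pi_pos.le)
  -- k monotone on [0, a]
  have hkmono : MonotoneOn (kf v) (Icc 0 a) := by
    apply monotoneOn_of_deriv_nonneg (convex_Icc 0 a)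
    · exact fun x _ => ((hasDerivAt_kf hv x).continuousAt).continuousWithinAt
    · exact fun x _ => ((hasDerivAt_kf hv x).differentiableAt).differentiableWithinAt
    · intro x hx
      rw [interior_Icc] at hx
      rw [(hasDerivAt_kf hv x).deriv]
      have hx2 : x ^ 2 ≤ a ^ 2 := by nlinarith [hx.1.le, hx.2.le]
      rw [ha2, le_div_iff₀ Real.pi_pos] at hx2
      have : 0 ≤ π - 2 - π * x ^ 2 / (v:ℝ) := by
        rw [sub_nonneg, div_le_iff₀ hV]
        nlinarith
      exact mul_nonneg (f_pos hv x).le this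
  -- k antitone on [a, ∞)
  have hkanti : AntitoneOn (kf v) (Ici a) := by
    apply antitoneOn_of_deriv_nonpos (convex_Ici a)
    · exact fun x _ => ((hasDerivAt_kf hv x).continuousAt).continuousWithinAt
    · exact fun x _ => ((hasDerivAt_kf hv x).differentiableAt).differentiableWithinAt
    · intro x hx
      rw [interior_Ici] at hx
      rw [(hasDerivAt_kf hv x).deriv]
      have hx2 : a ^ 2 ≤ x ^ 2 := by nlinarith [ha0, (mem_Ioi.mp hx).le]
      rw [ha2, div_le_iff₀ Real.pi_pos] at hx2
      have : π - 2 - π * x ^ 2 / (v:ℝ) ≤ 0 := by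
        rw [sub_nonpos, le_div_iff₀ hV]
        nlinarith
      exact mul_nonpos_of_nonneg_of_nonpos (f_pos hv x).le this
  have hk0a : ∀ x ∈ Icc (0:ℝ) a, 0 ≤ kf v x := by
    intro x hx
    rw [← kf_zero hv]
    exact hkmono (left_mem_Icc.mpr ha0) hx hx.1
  -- reduce to c ≥ 0
  suffices h : ∀ c : ℝ, 0 ≤ c → 0 ≤ Df v c by
    rcases le_total 0 c with hc | hc
    · exact h c hc
    · rw [← Df_even hv]; exact h (-c) (by linarith)
  clear c
  intro c hc
  -- case c ≤ a or c > a
  rcases le_total c a with hca | hca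
  · -- D monotone on [0, a], D c ≥ D 0 = 0
    have hDmono : MonotoneOn (Df v) (Icc 0 a) := by
      apply monotoneOn_of_deriv_nonneg (convex_Icc 0 a)
      · exact fun x _ => ((hasDerivAt_Df hv x).continuousAt).continuousWithinAt
      · exact fun x _ => ((hasDerivAt_Df hv x).differentiableAt).differentiableWithinAt
      · intro x hx
        rw [interior_Icc] at hx
        rw [(hasDerivAt_Df hv x).deriv]
        exact mul_nonneg (f_pos hv x).le (hk0a x ⟨hx.1.le, hx.2.le⟩)
    have := hDmono (left_mem_Icc.mpr ha0) ⟨hc, hca⟩ hc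
    rwa [Df_zero hv] at this
  · rcases le_or_gt 0 (kf v c) with hkc | hkc
    · -- k ≥ 0 on [0, c]
      have hk0c : ∀ x ∈ Icc (0:ℝ) c, 0 ≤ kf v x := by
        intro x hx
        rcases le_total x a with hxa | hxa
        · exact hk0a x ⟨hx.1, hxa⟩
        · exact hkc.trans (hkanti (mem_Ici.mpr hxa) (mem_Ici.mpr hca) hx.2)
      have hDmono : MonotoneOn (Df v) (Icc 0 c) := by
        apply monotoneOn_of_deriv_nonneg (convex_Icc 0 c)
        · exact fun x _ => ((hasDerivAt_Df hv x).continuousAt).continuousWithinAt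
        · exact fun x _ => ((hasDerivAt_Df hv x).differentiableAt).differentiableWithinAt
        · intro x hx
          rw [interior_Icc] at hx
          rw [(hasDerivAt_Df hv x).deriv]
          exact mul_nonneg (f_pos hv x).le (hk0c x ⟨hx.1.le, hx.2.le⟩)
      have := hDmono (left_mem_Icc.mpr (ha0.trans hca)) ⟨hc, le_refl c⟩ hc
      rwa [Df_zero hv] at this
    · -- k ≤ 0 on [c, ∞), D antitone there, D → 0
      have hDanti : AntitoneOn (Df v) (Ici c) := by
        apply antitoneOn_of_deriv_nonpos (convex_Ici c)
        · exact fun x _ => ((hasDerivAt_Df hv x).continuousAt).continuousWithinAt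
        · exact fun x _ => ((hasDerivAt_Df hv x).differentiableAt).differentiableWithinAt
        · intro x hx
          rw [interior_Ici] at hx
          have hxc : c ≤ x := (mem_Ioi.mp hx).le
          have hkx : kf v x ≤ 0 :=
            ((hkanti (mem_Ici.mpr hca) (mem_Ici.mpr (hca.trans hxc)) hxc).trans hkc.le)
          rw [(hasDerivAt_Df hv x).deriv]
          exact mul_nonpos_of_nonneg_of_nonpos (f_pos hv x).le hkx
      refine le_of_tendsto (Df_tendsto_atTop hv) ?_
      filter_upwards [eventually_ge_atTop c] with y hy
      exact hDanti (mem_Ici.mpr le_rfl) (mem_Ici.mpr hy) hy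


end GOS

open MeasureTheory ProbabilityTheory Real

/-- For `X ~ N(0, v)`, among all splits of ℝ into `(-∞, c]` and `(c, ∞)`,
the within-cluster sum of squares
`W(c) = E[(X - m₁(c))² 1{X ≤ c}] + E[(X - m₂(c))² 1{X > c}]`
(with `m₁(c), m₂(c)` the conditional means on the two pieces)
is minimized at `c = 0`, with minimum value `v·(1 - 2/π)`. -/
theorem gaussian_optimal_split (v : NNReal) (hv : 0 < v)
    (m₁ m₂ W : ℝ → ℝ)
    (hm₁ : ∀ c, m₁ c = (∫ x in Set.Iic c, x ∂(gaussianReal 0 v)) /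
      ((gaussianReal 0 v) (Set.Iic c)).toReal)
    (hm₂ : ∀ c, m₂ c = (∫ x in Set.Ioi c, x ∂(gaussianReal 0 v)) /
      ((gaussianReal 0 v) (Set.Ioi c)).toReal)
    (hW : ∀ c, W c = (∫ x in Set.Iic c, (x - m₁ c) ^ 2 ∂(gaussianReal 0 v)) +
      (∫ x in Set.Ioi c, (x - m₂ c) ^ 2 ∂(gaussianReal 0 v))) :
    (∀ c : ℝ, W 0 ≤ W c) ∧ W 0 = (v : ℝ) * (1 - 2 / π) := by
  have hV : (0 : ℝ) < v := hv
  have hWf : ∀ c : ℝ, W c = (v : ℝ) - ((v:ℝ) * GOS.f v c) ^ 2 / GOS.Φ v c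
      - ((v:ℝ) * GOS.f v c) ^ 2 / GOS.Ψ v c := by
    intro c
    have hp := GOS.Phi_pos hv c
    have hq := GOS.Psi_pos hv c
    have hpq := GOS.PhiPsi' hv c
    have hm1 : m₁ c = -((v:ℝ) * GOS.f v c) / GOS.Φ v c := by
      rw [hm₁ c, GOS.nu_setIntegral hv measurableSet_Iic, GOS.meas_Iic hv,
        GOS.tail_xf_Iic hv]
    have hm2 : m₂ c = ((v:ℝ) * GOS.f v c) / GOS.Ψ v c := by
      rw [hm₂ c, GOS.nu_setIntegral hv measurableSet_Ioi, GOS.meas_Ioi hv,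
        GOS.tail_xf_Ioi hv]
    rw [hW c, GOS.nu_setIntegral hv measurableSet_Iic, GOS.nu_setIntegral hv measurableSet_Ioi,
      GOS.expand_Iic hv, GOS.expand_Ioi hv, GOS.tail_xf_Iic hv, GOS.tail_xf_Ioi hv,
      GOS.tail_x2f_Iic hv, GOS.tail_x2f_Ioi hv, hm1, hm2]
    have hΨ : GOS.Ψ v c = 1 - GOS.Φ v c := by linarith
    rw [hΨ]
    have h1 : (1 : ℝ) - GOS.Φ v c ≠ 0 := by rw [← hΨ]; exact hq.ne'
    field_simp [hp.ne', h1]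
    ring
  have hW0 : W 0 = (v : ℝ) * (1 - 2 / π) := by
    have hf0 : GOS.f v 0 ^ 2 = (2 * π * (v:ℝ))⁻¹ := by
      have := GOS.f_sq hv 0
      simpa using this
    rw [hWf 0, GOS.Phi_zero hv, GOS.Psi_zero hv, mul_pow, hf0]
    have hπ : (0:ℝ) < π := Real.pi_pos
    field_simp
    ring
  refine ⟨fun c => ?_, hW0⟩
  rw [hW0, hWf c]
  have hp := GOS.Phi_pos hv c
  have hq := GOS.Psi_pos hv c
  have hpq := GOS.PhiPsi' hv c
  have hπ : (0:ℝ) < π := Real.pi_pos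
  have hcore := GOS.core hv c
  rw [GOS.Df] at hcore
  have h1 : rexp (-c ^ 2 / (v:ℝ)) ≤ 4 * (GOS.Φ v c * GOS.Ψ v c) := by linarith
  set S : ℝ := (v:ℝ) * GOS.f v c with hS
  have hS2 : S ^ 2 = ((v:ℝ) / (2 * π)) * rexp (-c ^ 2 / (v:ℝ)) := by
    rw [hS, mul_pow, GOS.f_sq hv]
    field_simp
  have key : S ^ 2 / GOS.Φ v c + S ^ 2 / GOS.Ψ v c ≤ 2 * (v:ℝ) / π := by
    rw [div_add_div _ _ hp.ne' hq.ne', div_le_iff₀ (by positivity)]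
    calc S ^ 2 * GOS.Ψ v c + GOS.Φ v c * S ^ 2 = S ^ 2 := by linear_combination S ^ 2 * hpq
      _ = ((v:ℝ) / (2 * π)) * rexp (-c ^ 2 / (v:ℝ)) := hS2
      _ ≤ ((v:ℝ) / (2 * π)) * (4 * (GOS.Φ v c * GOS.Ψ v c)) := by
          apply mul_le_mul_of_nonneg_left h1 (by positivity)
      _ = 2 * (v:ℝ) / π * (GOS.Φ v c * GOS.Ψ v c) := by ring
  have hvid : (v:ℝ) * (1 - 2 / π) = (v:ℝ) - 2 * (v:ℝ) / π := by ring
  linarith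
end

section
/- Let x ~ N(0, Σ) be a d-dimensional Gaussian with covariance Σ having eigenvalues λ₁ ≥ λ₂ ≥ ⋯ ≥ λ_d > 0. For the partition of ℝ^d into two half-spaces {S₁, S₂} determined by the hyperplane through the origin orthogonal to the leading eigenvector, the theoretical cluster index WSS/TSS equals 1 − (2/π)·λ₁/(λ₁ + ⋯ + λ_d), where TSS = E‖x‖² and WSS = E[‖x − μ₁‖² 1{x∈S₁}] + E[‖x − μ₂‖² 1{x∈S₂}] with μ_i the conditional mean of x on S_i. -/
open MeasureTheory ProbabilityTheory Real Set Filter Topology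
open scoped NNReal ENNReal

namespace ClusterIndexAux

lemma integral_mul_exp_neg_mul_sq_Ioi {b : ℝ} (hb : 0 < b) :
    ∫ x in Ioi (0:ℝ), x * Real.exp (-b * x ^ 2) = (2 * b)⁻¹ := by
  have hb' : b ≠ 0 := ne_of_gt hb
  have A : ∀ x : ℝ, HasDerivAt (fun y => -(2 * b)⁻¹ * Real.exp (-b * y ^ 2))
      (x * Real.exp (-b * x ^ 2)) x := by
    intro x
    convert (((hasDerivAt_pow 2 x).const_mul (-b)).exp.const_mul (-(2 * b)⁻¹)) using 1
    · rfl
    · rfl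
    field_simp
    ring
  have B : Tendsto (fun y : ℝ => -(2 * b)⁻¹ * Real.exp (-b * y ^ 2)) atTop
      (𝓝 (-(2 * b)⁻¹ * 0)) := by
    refine Tendsto.const_mul _ (Real.tendsto_exp_atBot.comp ?_)
    exact (tendsto_pow_atTop two_ne_zero).const_mul_atTop_of_neg (neg_lt_zero.2 hb)
  have := integral_Ioi_of_hasDerivAt_of_tendsto' (a := 0) (fun x _ => A x)
    ((integrable_mul_exp_neg_mul_sq hb).integrableOn) B
  rw [this]
  simp [Real.exp_zero]

lemma integrable_sq_mul_exp_neg_mul_sq {b : ℝ} (hb : 0 < b) :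
    Integrable (fun x : ℝ => x ^ 2 * Real.exp (-b * x ^ 2)) := by
  have h := integrable_rpow_mul_exp_neg_mul_sq hb (s := 2) (by norm_num)
  exact h.congr (Eventually.of_forall fun x => by
    norm_num [show ((2:ℝ)) = ((2:ℕ):ℝ) by norm_num, Real.rpow_natCast])

lemma integral_sq_mul_exp_neg_mul_sq_Ioi {b : ℝ} (hb : 0 < b) :
    ∫ x in Ioi (0:ℝ), x ^ 2 * Real.exp (-b * x ^ 2)
      = (2 * b)⁻¹ * (Real.sqrt (π / b) / 2) := by
  have hb' : b ≠ 0 := ne_of_gt hb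
  have hint2 : IntegrableOn (fun x : ℝ => x ^ 2 * Real.exp (-b * x ^ 2)) (Ioi 0) :=
    (integrable_sq_mul_exp_neg_mul_sq hb).integrableOn
  have hint1 : IntegrableOn (fun x : ℝ => Real.exp (-b * x ^ 2)) (Ioi 0) :=
    (integrable_exp_neg_mul_sq hb).integrableOn
  have A : ∀ x : ℝ, HasDerivAt (fun y => (2 * b)⁻¹ * y * Real.exp (-b * y ^ 2))
      ((2 * b)⁻¹ * Real.exp (-b * x ^ 2) - x ^ 2 * Real.exp (-b * x ^ 2)) x := by
    intro x
    have h1 : HasDerivAt (fun y : ℝ => (2 * b)⁻¹ * y) ((2 * b)⁻¹) x := by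
      simpa using (hasDerivAt_id x).const_mul ((2 * b)⁻¹)
    have h2 : HasDerivAt (fun y : ℝ => Real.exp (-b * y ^ 2))
        (Real.exp (-b * x ^ 2) * (-b * (2 * x))) x := by
      simpa using ((hasDerivAt_pow 2 x).const_mul (-b)).exp
    convert h1.mul h2 using 1
    · rfl
    · rfl
    · rfl
    field_simp
    ring
  have B : Tendsto (fun y : ℝ => (2 * b)⁻¹ * y * Real.exp (-b * y ^ 2)) atTop (𝓝 0) := by
    have ho := (rpow_mul_exp_neg_mul_sq_isLittleO_exp_neg hb 1).trans_tendsto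
      (Real.tendsto_exp_atBot.comp (tendsto_id.const_mul_atTop_of_neg (by norm_num)))
    have h2 := (ho.const_mul ((2 * b)⁻¹)).congr
      (fun x => by rw [← mul_assoc])
    simpa [Real.rpow_one] using h2
  have key := integral_Ioi_of_hasDerivAt_of_tendsto' (a := 0) (fun x _ => A x)
    ((hint1.const_mul _).sub hint2) B
  rw [integral_sub (hint1.const_mul _) hint2, integral_const_mul, integral_gaussian_Ioi] at key
  simp only [mul_zero, zero_mul, Real.exp_zero, mul_one, zero_sub, sub_eq_neg_self] at key ⊢
  linarith [key]

noncomputable def mm (v : ℝ≥0) : ℝ := (v : ℝ) * (Real.sqrt (2 * π * v))⁻¹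

variable {v : ℝ≥0}

lemma pdf_eq (v : ℝ≥0) (x : ℝ) :
    gaussianPDFReal 0 v x
      = (Real.sqrt (2 * π * v))⁻¹ * Real.exp (-(2 * (v:ℝ))⁻¹ * x ^ 2) := by
  unfold gaussianPDFReal
  rw [sub_zero]
  congr 1
  ring

lemma pdf_even (v : ℝ≥0) (x : ℝ) : gaussianPDFReal 0 v (-x) = gaussianPDFReal 0 v x := by
  rw [pdf_eq, pdf_eq, neg_sq]

lemma hb_pos (hv : v ≠ 0) : 0 < (2 * (v:ℝ))⁻¹ := by
  have hv' : 0 < (v : ℝ) := by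
    exact_mod_cast lt_of_le_of_ne zero_le (Ne.symm hv)
  positivity

lemma setIntegral_gaussianReal (hv : v ≠ 0) {s : Set ℝ} (hs : MeasurableSet s) (f : ℝ → ℝ) :
    ∫ x in s, f x ∂gaussianReal 0 v = ∫ x in s, gaussianPDFReal 0 v x * f x := by
  rw [gaussianReal_of_var_ne_zero 0 hv, gaussianPDF_def]
  rw [show (fun x => ENNReal.ofReal (gaussianPDFReal 0 v x))
      = (fun x => ((gaussianPDFReal 0 v x).toNNReal : ℝ≥0∞)) from rfl]
  rw [restrict_withDensity hs, integral_withDensity_eq_integral_smul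
    ((measurable_gaussianPDFReal 0 v).real_toNNReal) f]
  congr 1
  funext x
  rw [NNReal.smul_def, smul_eq_mul, Real.coe_toNNReal _ (gaussianPDFReal_nonneg 0 v x)]

lemma integral_gaussianReal (hv : v ≠ 0) (f : ℝ → ℝ) :
    ∫ x, f x ∂gaussianReal 0 v = ∫ x, gaussianPDFReal 0 v x * f x := by
  have := setIntegral_gaussianReal hv MeasurableSet.univ f
  simpa using this

lemma integrable_gaussianReal_iff (hv : v ≠ 0) {f : ℝ → ℝ} :
    Integrable f (gaussianReal 0 v)
      ↔ Integrable (fun x => gaussianPDFReal 0 v x * f x) := by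
  rw [gaussianReal_of_var_ne_zero 0 hv, gaussianPDF_def]
  rw [show (fun x => ENNReal.ofReal (gaussianPDFReal 0 v x))
      = (fun x => ((gaussianPDFReal 0 v x).toNNReal : ℝ≥0∞)) from rfl]
  rw [integrable_withDensity_iff_integrable_smul
    ((measurable_gaussianPDFReal 0 v).real_toNNReal)]
  apply integrable_congr
  filter_upwards with x
  rw [NNReal.smul_def, smul_eq_mul, Real.coe_toNNReal _ (gaussianPDFReal_nonneg 0 v x)]


lemma reflect_Iic (f : ℝ → ℝ) :
    ∫ x in Iic (0:ℝ), f x = ∫ x in Ioi (0:ℝ), f (-x) := by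
  rw [integral_comp_neg_Ioi]
  simp

section moments

variable (hv : v ≠ 0)
include hv

lemma vpos : 0 < (v : ℝ) := by
  exact_mod_cast lt_of_le_of_ne zero_le (Ne.symm hv)

lemma sqrt_pib : Real.sqrt (π / (2 * (v:ℝ))⁻¹) = Real.sqrt (2 * π * v) := by
  have hv' : (v:ℝ) ≠ 0 := ne_of_gt (vpos hv)
  congr 1
  field_simp

lemma C_mul_sqrt : (Real.sqrt (2 * π * (v:ℝ)))⁻¹ * Real.sqrt (2 * π * (v:ℝ)) = 1 := by
  have hv' : 0 < (v:ℝ) := vpos hv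
  exact inv_mul_cancel₀ (ne_of_gt (Real.sqrt_pos.mpr (by positivity)))

lemma pdf_Ioi_half : ∫ x in Ioi (0:ℝ), gaussianPDFReal 0 v x = 1/2 := by
  simp_rw [pdf_eq]
  rw [integral_const_mul, integral_gaussian_Ioi, sqrt_pib hv]
  rw [show (Real.sqrt (2*π*(v:ℝ)))⁻¹ * (Real.sqrt (2*π*(v:ℝ))/2)
    = ((Real.sqrt (2*π*(v:ℝ)))⁻¹ * Real.sqrt (2*π*(v:ℝ)))/2 by ring, C_mul_sqrt hv]

lemma pdf_Iic_half : ∫ x in Iic (0:ℝ), gaussianPDFReal 0 v x = 1/2 := by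
  rw [reflect_Iic]
  simp_rw [pdf_even]
  exact pdf_Ioi_half hv

lemma meas_Iic : gaussianReal 0 v (Iic 0) = 1/2 := by
  rw [gaussianReal_apply_eq_integral 0 hv, pdf_Iic_half hv]
  rw [show (1/2 : ℝ) = ((1/2 : ℝ≥0) : ℝ) by norm_num, ENNReal.ofReal_coe_nnreal]
  norm_num

lemma meas_Ioi : gaussianReal 0 v (Ioi 0) = 1/2 := by
  rw [gaussianReal_apply_eq_integral 0 hv, pdf_Ioi_half hv]
  rw [show (1/2 : ℝ) = ((1/2 : ℝ≥0) : ℝ) by norm_num, ENNReal.ofReal_coe_nnreal]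
  norm_num

lemma int_id_Ioi : ∫ x in Ioi (0:ℝ), x ∂gaussianReal 0 v = mm v := by
  rw [setIntegral_gaussianReal hv measurableSet_Ioi]
  simp_rw [pdf_eq]
  rw [show (fun x : ℝ => (Real.sqrt (2*π*(v:ℝ)))⁻¹ * Real.exp (-(2*(v:ℝ))⁻¹ * x^2) * x)
      = (fun x : ℝ => (Real.sqrt (2*π*(v:ℝ)))⁻¹ * (x * Real.exp (-(2*(v:ℝ))⁻¹ * x^2)))
      from funext fun x => by ring]
  rw [integral_const_mul, integral_mul_exp_neg_mul_sq_Ioi (hb_pos hv)]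
  have hv' : (v:ℝ) ≠ 0 := ne_of_gt (vpos hv)
  rw [show ((2:ℝ) * (2 * (v:ℝ))⁻¹)⁻¹ = (v:ℝ) by field_simp]
  rw [mm]; ring

lemma int_id_Iic : ∫ x in Iic (0:ℝ), x ∂gaussianReal 0 v = -(mm v) := by
  rw [setIntegral_gaussianReal hv measurableSet_Iic, reflect_Iic]
  simp_rw [pdf_even, mul_neg]
  rw [integral_neg]
  rw [← setIntegral_gaussianReal hv measurableSet_Ioi]
  rw [int_id_Ioi hv]

lemma int_sq_Ioi : ∫ x in Ioi (0:ℝ), x^2 ∂gaussianReal 0 v = (v:ℝ)/2 := by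
  rw [setIntegral_gaussianReal hv measurableSet_Ioi]
  simp_rw [pdf_eq]
  rw [show (fun x : ℝ => (Real.sqrt (2*π*(v:ℝ)))⁻¹ * Real.exp (-(2*(v:ℝ))⁻¹ * x^2) * x^2)
      = (fun x : ℝ => (Real.sqrt (2*π*(v:ℝ)))⁻¹ * (x^2 * Real.exp (-(2*(v:ℝ))⁻¹ * x^2)))
      from funext fun x => by ring]
  rw [integral_const_mul, integral_sq_mul_exp_neg_mul_sq_Ioi (hb_pos hv), sqrt_pib hv]
  have hv' : (v:ℝ) ≠ 0 := ne_of_gt (vpos hv)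
  rw [show ((2:ℝ) * (2 * (v:ℝ))⁻¹)⁻¹ = (v:ℝ) by field_simp]
  have h1 : (Real.sqrt (2*π*(v:ℝ)))⁻¹ * ((v:ℝ) * (Real.sqrt (2*π*(v:ℝ))/2))
      = ((Real.sqrt (2*π*(v:ℝ)))⁻¹ * Real.sqrt (2*π*(v:ℝ))) * ((v:ℝ)/2) := by ring
  rw [h1, C_mul_sqrt hv, one_mul]

lemma int_sq_Iic : ∫ x in Iic (0:ℝ), x^2 ∂gaussianReal 0 v = (v:ℝ)/2 := by
  rw [setIntegral_gaussianReal hv measurableSet_Iic, reflect_Iic]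
  simp_rw [pdf_even, neg_sq]
  rw [← setIntegral_gaussianReal hv measurableSet_Ioi]
  exact int_sq_Ioi hv

lemma integrable_id : Integrable (fun x : ℝ => x) (gaussianReal 0 v) := by
  rw [integrable_gaussianReal_iff hv]
  refine ((integrable_mul_exp_neg_mul_sq (hb_pos hv)).const_mul
    ((Real.sqrt (2*π*(v:ℝ)))⁻¹)).congr ?_
  filter_upwards with x
  rw [pdf_eq]; ring

lemma integrable_sq : Integrable (fun x : ℝ => x^2) (gaussianReal 0 v) := by
  rw [integrable_gaussianReal_iff hv]
  refine ((integrable_sq_mul_exp_neg_mul_sq (hb_pos hv)).const_mul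
    ((Real.sqrt (2*π*(v:ℝ)))⁻¹)).congr ?_
  filter_upwards with x
  rw [pdf_eq]; ring

lemma int_id_total : ∫ x, x ∂gaussianReal 0 v = 0 := by
  rw [← integral_add_compl measurableSet_Iic (integrable_id hv), compl_Iic,
    int_id_Iic hv, int_id_Ioi hv]
  ring

lemma int_sq_total : ∫ x, x^2 ∂gaussianReal 0 v = (v:ℝ) := by
  rw [← integral_add_compl measurableSet_Iic (integrable_sq hv), compl_Iic,
    int_sq_Iic hv, int_sq_Ioi hv]
  ring

lemma mm_sq : mm v ^ 2 = (v:ℝ) / (2 * π) := by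
  have hv' : 0 < (v:ℝ) := vpos hv
  have h2 : (0:ℝ) ≤ 2 * π * v := by positivity
  rw [mm, mul_pow, inv_pow, Real.sq_sqrt h2]
  field_simp





end moments

section shift

variable {v : ℝ≥0}

lemma integrable_shift (hv : v ≠ 0) (c : ℝ) :
    Integrable (fun t : ℝ => (t - c)^2) (gaussianReal 0 v) := by
  have h : (fun t : ℝ => (t - c)^2) = fun t => t^2 - (2*c)*t + c^2 := funext fun t => by ring
  rw [h]
  exact ((integrable_sq hv).sub ((integrable_id hv).const_mul _)).add (integrable_const _)

lemma shift_formula (hv : v ≠ 0) {s : Set ℝ} (hs : MeasurableSet s) (c : ℝ) :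
    ∫ t in s, (t - c)^2 ∂gaussianReal 0 v
      = (∫ t in s, t^2 ∂gaussianReal 0 v) - 2*c*(∫ t in s, t ∂gaussianReal 0 v)
        + c^2 * ((gaussianReal 0 v) s).toReal := by
  have h1 : IntegrableOn (fun t : ℝ => t^2) s (gaussianReal 0 v) :=
    (integrable_sq hv).integrableOn
  have h2 : IntegrableOn (fun t : ℝ => (2*c)*t) s (gaussianReal 0 v) :=
    ((integrable_id hv).const_mul _).integrableOn
  have h3 : IntegrableOn (fun _ : ℝ => c^2) s (gaussianReal 0 v) :=
    (integrable_const _).integrableOn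
  rw [show (fun t : ℝ => (t - c)^2) = fun t => (t^2 - (2*c)*t) + c^2 from funext fun t => by ring]
  have h12 : IntegrableOn (fun t : ℝ => t^2 - (2*c)*t) s (gaussianReal 0 v) := h1.sub h2
  rw [integral_add h12 h3, integral_sub h1 h2, integral_const_mul, setIntegral_const]
  simp only [smul_eq_mul, measureReal_def]
  ring

end shift

section prodmeas

lemma prod_eq_single_of {α M : Type*} [Fintype α] [CommMonoid M]
    (i : α) (G : α → M) (h0 : ∀ j, j ≠ i → G j = 1) : ∏ j, G j = G i :=
  Finset.prod_eq_single i (fun b _ hb => h0 b hb) (by simp)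

lemma prod_eq_mul_of_ne {α M : Type*} [Fintype α] [DecidableEq α] [CommMonoid M]
    (i0 i : α) (h : i ≠ i0) (G : α → M) (h0 : ∀ j, j ≠ i0 → j ≠ i → G j = 1) :
    ∏ j, G j = G i0 * G i := by
  rw [← Finset.mul_prod_erase Finset.univ G (Finset.mem_univ i0)]
  congr 1
  rw [← Finset.mul_prod_erase _ G (show i ∈ Finset.univ.erase i0 by simp [h]),
    Finset.prod_eq_one, mul_one]
  intro j hj
  simp only [Finset.mem_erase] at hj
  exact h0 j hj.2.1 hj.1

variable {d : ℕ} (ν : Fin d → Measure ℝ) [∀ i, IsProbabilityMeasure (ν i)]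

lemma integral_pi_prod (f : Fin d → ℝ → ℝ) :
    ∫ x : Fin d → ℝ, ∏ i, f i (x i) ∂Measure.pi ν = ∏ i, ∫ t, f i t ∂ν i :=
  MeasureTheory.integral_fin_nat_prod_eq_prod (E := fun _ => ℝ) (μ := ν) f

lemma integrable_pi_prod (f : Fin d → ℝ → ℝ) (hf : ∀ i, Integrable (f i) (ν i)) :
    Integrable (fun x : Fin d → ℝ => ∏ i, f i (x i)) (Measure.pi ν) :=
  MeasureTheory.Integrable.fin_nat_prod (E := fun _ => ℝ) (μ := ν) (f := f) hf

lemma integrable_eval (i : Fin d) (f : ℝ → ℝ) (hf : Integrable f (ν i)) :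
    Integrable (fun x : Fin d → ℝ => f (x i)) (Measure.pi ν) := by
  classical
  have he : ∀ x : Fin d → ℝ,
      (∏ j, (if j = i then f else fun _ => (1:ℝ)) (x j)) = f (x i) := by
    intro x
    rw [prod_eq_single_of i _ (fun j hj => by simp [hj])]
    simp
  refine (integrable_pi_prod ν _ ?_).congr (Eventually.of_forall he)
  intro j
  by_cases h : j = i
  · subst h; simpa using hf
  · simpa [h] using (integrable_const (1:ℝ) (μ := ν j))

lemma integral_eval (i : Fin d) (f : ℝ → ℝ) (hf : Integrable f (ν i)) :
    ∫ x : Fin d → ℝ, f (x i) ∂Measure.pi ν = ∫ t, f t ∂ν i := by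
  classical
  have he : ∀ x : Fin d → ℝ,
      (∏ j, (if j = i then f else fun _ => (1:ℝ)) (x j)) = f (x i) := by
    intro x
    rw [prod_eq_single_of i _ (fun j hj => by simp [hj])]
    simp
  rw [show (fun x : Fin d → ℝ => f (x i))
    = fun x => ∏ j, (if j = i then f else fun _ => (1:ℝ)) (x j) from funext fun x => (he x).symm]
  rw [integral_pi_prod]
  rw [prod_eq_single_of i _ (fun j hj => by simp [hj])]
  simp

lemma integrable_eval_two (i0 i : Fin d) (h : i ≠ i0) (g f : ℝ → ℝ)
    (hg : Integrable g (ν i0)) (hf : Integrable f (ν i)) :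
    Integrable (fun x : Fin d → ℝ => g (x i0) * f (x i)) (Measure.pi ν) := by
  classical
  have he : ∀ x : Fin d → ℝ,
      (∏ j, (if j = i0 then g else if j = i then f else fun _ => (1:ℝ)) (x j))
        = g (x i0) * f (x i) := by
    intro x
    rw [prod_eq_mul_of_ne i0 i h _ (fun j hj0 hji => by simp [hj0, hji])]
    simp [h]
  refine (integrable_pi_prod ν _ ?_).congr (Eventually.of_forall he)
  intro j
  by_cases h0 : j = i0
  · subst h0; simpa using hg
  · by_cases h1 : j = i
    · subst h1; simpa [h0] using hf
    · simpa [h0, h1] using (integrable_const (1:ℝ) (μ := ν j))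

lemma integral_eval_two (i0 i : Fin d) (h : i ≠ i0) (g f : ℝ → ℝ)
    (hg : Integrable g (ν i0)) (hf : Integrable f (ν i)) :
    ∫ x : Fin d → ℝ, g (x i0) * f (x i) ∂Measure.pi ν
      = (∫ t, g t ∂ν i0) * ∫ t, f t ∂ν i := by
  classical
  have he : ∀ x : Fin d → ℝ,
      (∏ j, (if j = i0 then g else if j = i then f else fun _ => (1:ℝ)) (x j))
        = g (x i0) * f (x i) := by
    intro x
    rw [prod_eq_mul_of_ne i0 i h _ (fun j hj0 hji => by simp [hj0, hji])]
    simp [h]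
  rw [show (fun x : Fin d → ℝ => g (x i0) * f (x i))
    = fun x => ∏ j, (if j = i0 then g else if j = i then f else fun _ => (1:ℝ)) (x j)
    from funext fun x => (he x).symm]
  rw [integral_pi_prod]
  rw [prod_eq_mul_of_ne i0 i h _ (fun j hj0 hji => by simp [hj0, hji])]
  simp [h]

lemma pi_measure_eval (i : Fin d) (s : Set ℝ) (hs : MeasurableSet s) :
    Measure.pi ν {x : Fin d → ℝ | x i ∈ s} = ν i s := by
  classical
  have : {x : Fin d → ℝ | x i ∈ s} = Set.pi Set.univ (fun j => if j = i then s else Set.univ) := by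
    ext x
    simp only [Set.mem_setOf_eq, Set.mem_pi, Set.mem_univ, forall_true_left]
    constructor
    · intro hx j
      by_cases h : j = i <;> simp [h, hx]
    · intro hx
      have := hx i
      simpa using this
  rw [this, Measure.pi_pi]
  rw [prod_eq_single_of i _ (fun j hj => by simp [hj])]
  simp

end prodmeas

section setev

variable {d : ℕ} (ν : Fin d → Measure ℝ) [∀ i, IsProbabilityMeasure (ν i)]
variable (i0 : Fin d) {s : Set ℝ} (hs : MeasurableSet s)
lemma ind_self (f : ℝ → ℝ) (x : Fin d → ℝ) :
    Set.indicator {y : Fin d → ℝ | y i0 ∈ s} (fun x => f (x i0)) x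
      = (s.indicator f) (x i0) := by
  by_cases hx : x i0 ∈ s
  · have hx' : x ∈ {y : Fin d → ℝ | y i0 ∈ s} := hx
    rw [Set.indicator_of_mem hx', Set.indicator_of_mem hx]
  · have hx' : x ∉ {y : Fin d → ℝ | y i0 ∈ s} := hx
    rw [Set.indicator_of_notMem hx', Set.indicator_of_notMem hx]

lemma ind_other (i : Fin d) (f : ℝ → ℝ) (x : Fin d → ℝ) :
    Set.indicator {y : Fin d → ℝ | y i0 ∈ s} (fun x => f (x i)) x
      = (s.indicator (fun _ => (1:ℝ))) (x i0) * f (x i) := by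
  by_cases hx : x i0 ∈ s
  · have hx' : x ∈ {y : Fin d → ℝ | y i0 ∈ s} := hx
    rw [Set.indicator_of_mem hx', Set.indicator_of_mem hx, one_mul]
  · have hx' : x ∉ {y : Fin d → ℝ | y i0 ∈ s} := hx
    rw [Set.indicator_of_notMem hx', Set.indicator_of_notMem hx, zero_mul]

include hs

lemma measurable_setS : MeasurableSet {y : Fin d → ℝ | y i0 ∈ s} :=
  (measurable_pi_apply i0) hs

lemma integrableOn_eval_self (f : ℝ → ℝ) (hf : Integrable f (ν i0)) :
    IntegrableOn (fun x : Fin d → ℝ => f (x i0)) {y : Fin d → ℝ | y i0 ∈ s} (Measure.pi ν) := by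
  rw [← integrable_indicator_iff (measurable_setS i0 hs)]
  refine (integrable_eval ν i0 (s.indicator f) (hf.indicator hs)).congr
    (Eventually.of_forall fun x => ?_)
  exact (ind_self i0 f x).symm

lemma setIntegral_eval_self (f : ℝ → ℝ) (hf : Integrable f (ν i0)) :
    ∫ x in {y : Fin d → ℝ | y i0 ∈ s}, f (x i0) ∂Measure.pi ν = ∫ t in s, f t ∂ν i0 := by
  rw [← integral_indicator (measurable_setS i0 hs)]
  rw [show (Set.indicator {y : Fin d → ℝ | y i0 ∈ s} (fun x => f (x i0)))
    = fun x => (s.indicator f) (x i0) from funext fun x => ind_self i0 f x]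
  rw [integral_eval ν i0 (s.indicator f) (hf.indicator hs), integral_indicator hs]

lemma integrableOn_eval_other (i : Fin d) (h : i ≠ i0) (f : ℝ → ℝ) (hf : Integrable f (ν i)) :
    IntegrableOn (fun x : Fin d → ℝ => f (x i)) {y : Fin d → ℝ | y i0 ∈ s} (Measure.pi ν) := by
  rw [← integrable_indicator_iff (measurable_setS i0 hs)]
  refine (integrable_eval_two ν i0 i h (s.indicator (fun _ => (1:ℝ))) f
    ((integrable_const _).indicator hs) hf).congr (Eventually.of_forall fun x => ?_)
  exact (ind_other i0 i f x).symm

lemma setIntegral_eval_other (i : Fin d) (h : i ≠ i0) (f : ℝ → ℝ) (hf : Integrable f (ν i)) :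
    ∫ x in {y : Fin d → ℝ | y i0 ∈ s}, f (x i) ∂Measure.pi ν
      = ((ν i0) s).toReal * ∫ t, f t ∂ν i := by
  rw [← integral_indicator (measurable_setS i0 hs)]
  rw [show (Set.indicator {y : Fin d → ℝ | y i0 ∈ s} (fun x => f (x i)))
    = fun x => (s.indicator (fun _ => (1:ℝ))) (x i0) * f (x i)
    from funext fun x => ind_other i0 i f x]
  rw [integral_eval_two ν i0 i h _ f ((integrable_const _).indicator hs) hf]
  congr 1
  rw [integral_indicator hs, setIntegral_const, smul_eq_mul, mul_one]
  rfl

end setev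

end ClusterIndexAux

open ClusterIndexAux

/-- For a centered `d`-dimensional Gaussian with covariance eigenvalues
`v 0 ≥ v 1 ≥ ⋯ ≥ v (d-1) > 0` (represented, by rotation invariance, in its
eigenbasis as the product of independent `N(0, v i)` coordinates), the partition of
`ℝ^d` into the two half-spaces determined by the hyperplane through the origin
orthogonal to the leading eigenvector (the coordinate hyperplane `{x | x 0 = 0}`)
has theoretical cluster index `WSS/TSS = 1 - (2/π) · v 0 / (Σ i, v i)`, where
`TSS = E‖x‖²` and `WSS` is the within-cluster sum of squares about the
conditional means of the two half-spaces. -/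
theorem theoretical_cluster_index
    (d : ℕ) (hd : 0 < d) (v : Fin d → NNReal)
    (hpos : ∀ i, 0 < v i) (hsort : ∀ i j : Fin d, i ≤ j → v j ≤ v i)
    (P : Measure (Fin d → ℝ)) (hP : P = Measure.pi (fun i => gaussianReal 0 (v i)))
    (S₁ S₂ : Set (Fin d → ℝ))
    (hS₁ : S₁ = {x | x ⟨0, hd⟩ ≤ 0}) (hS₂ : S₂ = {x | 0 < x ⟨0, hd⟩})
    (μ₁ μ₂ : Fin d → ℝ)
    (hμ₁ : ∀ i, μ₁ i = (∫ x in S₁, x i ∂P) / (P S₁).toReal)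
    (hμ₂ : ∀ i, μ₂ i = (∫ x in S₂, x i ∂P) / (P S₂).toReal)
    (TSS WSS : ℝ)
    (hTSS : TSS = ∫ x, (∑ i, (x i) ^ 2) ∂P)
    (hWSS : WSS = (∫ x in S₁, (∑ i, (x i - μ₁ i) ^ 2) ∂P) +
      (∫ x in S₂, (∑ i, (x i - μ₂ i) ^ 2) ∂P)) :
    WSS / TSS = 1 - (2 / π) * ((v ⟨0, hd⟩ : ℝ) / ∑ i, (v i : ℝ)) := by
  classical
  subst hP hS₁ hS₂
  set i0 : Fin d := ⟨0, hd⟩ with hi0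
  set ν : Fin d → Measure ℝ := fun i => gaussianReal 0 (v i) with hν
  have hprob : ∀ i, IsProbabilityMeasure (ν i) := fun i => by rw [hν]; infer_instance
  have hvne : ∀ i, v i ≠ 0 := fun i => (hpos i).ne'
  have htr : ((1/2 : ℝ≥0∞)).toReal = 1/2 := by norm_num
  -- measures of the half spaces
  have hP1 : Measure.pi ν {x : Fin d → ℝ | x i0 ≤ 0} = 1/2 := by
    have h := pi_measure_eval ν i0 (Iic 0) measurableSet_Iic
    rw [show ν i0 (Iic 0) = 1/2 from meas_Iic (hvne i0)] at h
    exact h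
  have hP2 : Measure.pi ν {x : Fin d → ℝ | 0 < x i0} = 1/2 := by
    have h := pi_measure_eval ν i0 (Ioi 0) measurableSet_Ioi
    rw [show ν i0 (Ioi 0) = 1/2 from meas_Ioi (hvne i0)] at h
    exact h
  -- conditional means
  have hμ₁e : ∀ i, μ₁ i = if i = i0 then -(2 * mm (v i0)) else 0 := by
    intro i
    rw [hμ₁ i]
    rcases eq_or_ne i i0 with rfl | h
    · have e : ∫ x in {x : Fin d → ℝ | x i0 ≤ 0}, x i0 ∂Measure.pi ν = -(mm (v i0)) := by
        have h2 := setIntegral_eval_self ν i0 (measurableSet_Iic (a := (0:ℝ)))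
          (fun t => t) (integrable_id (hvne i0))
        rw [int_id_Iic (hvne i0)] at h2
        exact h2
      rw [e, hP1, htr, if_pos rfl, div_eq_iff (by norm_num : (1/2:ℝ) ≠ 0)]
      ring
    · have e : ∫ x in {x : Fin d → ℝ | x i0 ≤ 0}, x i ∂Measure.pi ν = 0 := by
        have h2 := setIntegral_eval_other ν i0 (measurableSet_Iic (a := (0:ℝ))) i h
          (fun t => t) (integrable_id (hvne i))
        rw [int_id_total (hvne i), mul_zero] at h2
        exact h2
      rw [e, if_neg h, zero_div]
  have hμ₂e : ∀ i, μ₂ i = if i = i0 then 2 * mm (v i0) else 0 := by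
    intro i
    rw [hμ₂ i]
    rcases eq_or_ne i i0 with rfl | h
    · have e : ∫ x in {x : Fin d → ℝ | 0 < x i0}, x i0 ∂Measure.pi ν = mm (v i0) := by
        have h2 := setIntegral_eval_self ν i0 (measurableSet_Ioi (a := (0:ℝ)))
          (fun t => t) (integrable_id (hvne i0))
        rw [int_id_Ioi (hvne i0)] at h2
        exact h2
      rw [e, hP2, htr, if_pos rfl, div_eq_iff (by norm_num : (1/2:ℝ) ≠ 0)]
      ring
    · have e : ∫ x in {x : Fin d → ℝ | 0 < x i0}, x i ∂Measure.pi ν = 0 := by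
        have h2 := setIntegral_eval_other ν i0 (measurableSet_Ioi (a := (0:ℝ))) i h
          (fun t => t) (integrable_id (hvne i))
        rw [int_id_total (hvne i), mul_zero] at h2
        exact h2
      rw [e, if_neg h, zero_div]
  -- TSS
  have hT : TSS = ∑ i, (v i : ℝ) := by
    rw [hTSS]
    rw [integral_finset_sum Finset.univ
      (fun i _ => integrable_eval ν i (fun t => t^2) (integrable_sq (hvne i)))]
    refine Finset.sum_congr rfl fun i _ => ?_
    rw [integral_eval ν i (fun t => t^2) (integrable_sq (hvne i)), int_sq_total (hvne i)]
  -- the two within-cluster sums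
  have W1 : ∫ x in {x : Fin d → ℝ | x i0 ≤ 0}, (∑ i, (x i - μ₁ i)^2) ∂Measure.pi ν
      = ∑ i, (if i = i0 then (v i0 : ℝ)/2 - 2 * (mm (v i0))^2 else (v i : ℝ)/2) := by
    have hint : ∀ i ∈ Finset.univ, IntegrableOn (fun x : Fin d → ℝ => (x i - μ₁ i)^2)
        {x : Fin d → ℝ | x i0 ≤ 0} (Measure.pi ν) := by
      intro i _
      rcases eq_or_ne i i0 with rfl | h
      · exact integrableOn_eval_self ν i0 (measurableSet_Iic (a := (0:ℝ)))
          (fun t => (t - μ₁ i0)^2) (integrable_shift (hvne i0) _)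
      · exact integrableOn_eval_other ν i0 (measurableSet_Iic (a := (0:ℝ))) i h
          (fun t => (t - μ₁ i)^2) (integrable_shift (hvne i) _)
    rw [integral_finset_sum Finset.univ hint]
    refine Finset.sum_congr rfl fun i _ => ?_
    rcases eq_or_ne i i0 with rfl | h
    · rw [hμ₁e i0, if_pos rfl, if_pos rfl]
      have h2 := setIntegral_eval_self ν i0 (measurableSet_Iic (a := (0:ℝ)))
        (fun t => (t - (-(2 * mm (v i0))))^2) (integrable_shift (hvne i0) _)
      rw [shift_formula (hvne i0) measurableSet_Iic, int_id_Iic (hvne i0),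
        int_sq_Iic (hvne i0), meas_Iic (hvne i0), htr] at h2
      exact h2.trans (by ring)
    · rw [hμ₁e i, if_neg h, if_neg h]
      have h2 := setIntegral_eval_other ν i0 (measurableSet_Iic (a := (0:ℝ))) i h
        (fun t => (t - 0)^2) (integrable_shift (hvne i) 0)
      have h3 : ∫ t, (t - 0)^2 ∂ν i = (v i : ℝ) := by
        simp only [sub_zero]
        exact int_sq_total (hvne i)
      rw [h3, meas_Iic (hvne i0), htr] at h2
      exact h2.trans (by ring)
  have W2 : ∫ x in {x : Fin d → ℝ | 0 < x i0}, (∑ i, (x i - μ₂ i)^2) ∂Measure.pi ν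
      = ∑ i, (if i = i0 then (v i0 : ℝ)/2 - 2 * (mm (v i0))^2 else (v i : ℝ)/2) := by
    have hint : ∀ i ∈ Finset.univ, IntegrableOn (fun x : Fin d → ℝ => (x i - μ₂ i)^2)
        {x : Fin d → ℝ | 0 < x i0} (Measure.pi ν) := by
      intro i _
      rcases eq_or_ne i i0 with rfl | h
      · exact integrableOn_eval_self ν i0 (measurableSet_Ioi (a := (0:ℝ)))
          (fun t => (t - μ₂ i0)^2) (integrable_shift (hvne i0) _)
      · exact integrableOn_eval_other ν i0 (measurableSet_Ioi (a := (0:ℝ))) i h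
          (fun t => (t - μ₂ i)^2) (integrable_shift (hvne i) _)
    rw [integral_finset_sum Finset.univ hint]
    refine Finset.sum_congr rfl fun i _ => ?_
    rcases eq_or_ne i i0 with rfl | h
    · rw [hμ₂e i0, if_pos rfl, if_pos rfl]
      have h2 := setIntegral_eval_self ν i0 (measurableSet_Ioi (a := (0:ℝ)))
        (fun t => (t - (2 * mm (v i0)))^2) (integrable_shift (hvne i0) _)
      rw [shift_formula (hvne i0) measurableSet_Ioi, int_id_Ioi (hvne i0),
        int_sq_Ioi (hvne i0), meas_Ioi (hvne i0), htr] at h2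
      exact h2.trans (by ring)
    · rw [hμ₂e i, if_neg h, if_neg h]
      have h2 := setIntegral_eval_other ν i0 (measurableSet_Ioi (a := (0:ℝ))) i h
        (fun t => (t - 0)^2) (integrable_shift (hvne i) 0)
      have h3 : ∫ t, (t - 0)^2 ∂ν i = (v i : ℝ) := by
        simp only [sub_zero]
        exact int_sq_total (hvne i)
      rw [h3, meas_Ioi (hvne i0), htr] at h2
      exact h2.trans (by ring)
  have hW : WSS = (∑ i, (v i : ℝ)) - 4 * (mm (v i0))^2 := by
    have hcomb : ∀ i ∈ Finset.univ,
        ((if i = i0 then (v i0:ℝ)/2 - 2*(mm (v i0))^2 else (v i:ℝ)/2)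
          + (if i = i0 then (v i0:ℝ)/2 - 2*(mm (v i0))^2 else (v i:ℝ)/2))
        = (v i:ℝ) - (if i = i0 then 4*(mm (v i0))^2 else 0) := by
      intro i _
      by_cases h : i = i0
      · rw [if_pos h, if_pos h, h]
        ring
      · rw [if_neg h, if_neg h]
        ring
    rw [hWSS, W1, W2, ← Finset.sum_add_distrib, Finset.sum_congr rfl hcomb,
      Finset.sum_sub_distrib, Finset.sum_ite_eq' Finset.univ i0 (fun _ => 4 * (mm (v i0))^2)]
    simp
  have hmm2 : 4 * (mm (v i0))^2 = (2/π) * (v i0 : ℝ) := by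
    rw [mm_sq (hvne i0)]
    have hπ : π ≠ 0 := Real.pi_ne_zero
    field_simp
    ring
  have hTpos : 0 < ∑ i, (v i : ℝ) :=
    Finset.sum_pos (fun i _ => by exact_mod_cast hpos i) ⟨i0, Finset.mem_univ i0⟩
  rw [hW, hT, hmm2]
  have hπ : π ≠ 0 := Real.pi_ne_zero
  field_simp
end

section
/- Fix σ > 0 and a positive semi-definite d×d matrix S̃ with eigendecomposition S̃ = Ũ Λ̃ Ũᵀ, Λ̃ = diag(λ̃₁ ≥ ⋯ ≥ λ̃_d ≥ 0). Consider minimizing f(C) = −log det C + trace(C S̃) over symmetric positive definite matrices C of the form C = (1/σ²) I − W₀ with W₀ ⪰ 0 and rank(W₀) ≤ l. Then a minimizer is given by C = Ũ ((1/σ²)I − D̂) Ũᵀ with D̂ = diag(d̂₁,…,d̂_d), where d̂_k = 1/σ² − 1/λ̃_k if k ≤ l and λ̃_k > σ², and d̂_k = 0 otherwise. -/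
open Matrix Real


noncomputable def htPsi (v s : ℝ) : ℝ := Real.log v + s / v
noncomputable def htG (v s : ℝ) : ℝ := max s v / v - 1 - Real.log (max s v / v)
noncomputable def htGd (v s : ℝ) : ℝ := 1 / v - 1 / max s v

variable {v : ℝ}

lemma max_pos' (hv : 0 < v) (s : ℝ) : 0 < max s v := lt_max_of_lt_right hv

lemma htG_nonneg (hv : 0 < v) (s : ℝ) : 0 ≤ htG v s := by
  have h : 0 < max s v / v := div_pos (max_pos' hv s) hv
  have := Real.log_le_sub_one_of_pos h
  unfold htG; linarith

lemma htG_of_le (hv : 0 < v) {s : ℝ} (h : s ≤ v) : htG v s = 0 := by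
  unfold htG
  rw [max_eq_right h, div_self hv.ne', Real.log_one]; ring

lemma htG_of_ge (hv : 0 < v) {s : ℝ} (h : v ≤ s) :
    htG v s = s / v - 1 - (Real.log s - Real.log v) := by
  unfold htG
  rw [max_eq_left h, Real.log_div (by linarith : s ≠ 0) hv.ne']

lemma htGd_nonneg (hv : 0 < v) (s : ℝ) : 0 ≤ htGd v s := by
  have h1 : v ≤ max s v := le_max_right _ _
  have := one_div_le_one_div_of_le hv h1
  unfold htGd; linarith

lemma htGd_mono (hv : 0 < v) {s t : ℝ} (h : s ≤ t) : htGd v s ≤ htGd v t := by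
  have h1 : max s v ≤ max t v := max_le_max h le_rfl
  have := one_div_le_one_div_of_le (max_pos' hv s) h1
  unfold htGd; linarith

lemma htGd_le (hv : 0 < v) (s : ℝ) : htGd v s ≤ 1 / v := by
  have := one_div_pos.mpr (max_pos' hv s)
  unfold htGd; linarith

lemma htG_grad (hv : 0 < v) (a b : ℝ) :
    htG v a + htGd v a * (b - a) ≤ htG v b := by
  rcases le_or_gt a v with ha | ha
  · -- htGd v a = 0, htG v a = 0
    have h1 : htG v a = 0 := htG_of_le hv ha
    have h2 : htGd v a = 0 := by
      unfold htGd; rw [max_eq_right ha]; ring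
    rw [h1, h2]
    simpa using htG_nonneg hv b
  · have ha0 : 0 < a := lt_trans hv ha
    have hGa : htG v a = a / v - 1 - (Real.log a - Real.log v) := htG_of_ge hv ha.le
    have hda : htGd v a = 1 / v - 1 / a := by unfold htGd; rw [max_eq_left ha.le]
    rcases le_or_gt b v with hb | hb
    · -- b ≤ v ≤ a : htG v b = 0; suffices at b = v
      have h1 : htG v b = 0 := htG_of_le hv hb
      rw [h1, hGa, hda]
      have key : Real.log (v / a) ≤ v / a - 1 :=
        Real.log_le_sub_one_of_pos (div_pos hv ha0)
      rw [Real.log_div hv.ne' ha0.ne'] at key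
      have hmono : (1 / v - 1 / a) * (b - a) ≤ (1 / v - 1 / a) * (v - a) := by
        apply mul_le_mul_of_nonneg_left (by linarith)
        have := one_div_le_one_div_of_le hv ha.le
        linarith
      have hva : v / a ≤ 1 := (div_le_one ha0).mpr ha.le
      have expand : (1 / v - 1 / a) * (v - a) = 1 - a/v - v/a + 1 := by
        field_simp; ring
      nlinarith
    · -- v < b, v < a
      have hb0 : 0 < b := lt_trans hv hb
      have hGb : htG v b = b / v - 1 - (Real.log b - Real.log v) := htG_of_ge hv hb.le
      rw [hGa, hGb, hda]
      have key : Real.log (b / a) ≤ b / a - 1 :=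
        Real.log_le_sub_one_of_pos (div_pos hb0 ha0)
      rw [Real.log_div hb0.ne' ha0.ne'] at key
      have e1 : (1 / v - 1 / a) * (b - a) = (b - a) / v - (b / a - 1) := by
        field_simp
      have e2 : (b - a) / v = b / v - a / v := by ring
      linarith

lemma htPhi_le (hv : 0 < v) {c s : ℝ} (hc : 0 < c) (hcv : c ≤ 1 / v) (hs : 0 ≤ s) :
    htPsi v s - htG v s ≤ -Real.log c + c * s := by
  rcases le_or_gt s v with h | h
  · rw [htG_of_le hv h]
    unfold htPsi
    have hcv1 : c * v ≤ 1 := (le_div_iff₀ hv).mp hcv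
    have key : Real.log (c * v) ≤ c * v - 1 :=
      Real.log_le_sub_one_of_pos (mul_pos hc hv)
    rw [Real.log_mul hc.ne' hv.ne'] at key
    have hsv : s / v ≤ 1 := (div_le_one hv).mpr h
    have h3 : (1 - c * v) * (1 - s / v) = 1 - c * v - s / v + c * s := by
      field_simp; ring
    have h4 : 0 ≤ (1 - c * v) * (1 - s / v) :=
      mul_nonneg (by linarith) (by linarith)
    linarith
  · rw [htG_of_ge hv h.le]
    unfold htPsi
    have hs0 : 0 < s := lt_trans hv h
    have key : Real.log (c * s) ≤ c * s - 1 :=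
      Real.log_le_sub_one_of_pos (mul_pos hc hs0)
    rw [Real.log_mul hc.ne' hs0.ne'] at key
    linarith

open Finset

-- Abel summation lemma
lemma ht_abel : ∀ (n : ℕ) (c e : ℕ → ℝ), (∀ i < n, 0 ≤ c i) →
    (∀ i j, i ≤ j → j < n → c j ≤ c i) →
    (∀ j ≤ n, ∑ i ∈ range j, e i ≤ 0) →
    ∑ i ∈ range n, c i * e i ≤ 0 := by
  intro n
  induction n with
  | zero => intro c e _ _ _; simp
  | succ n ih =>
    intro c e hc hanti hp
    have key : ∑ i ∈ range n, (fun i => c (min i n) - c n) i * e i ≤ 0 := by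
      apply ih
      · intro i hi
        have := hanti (min i n) n (min_le_right _ _) (Nat.lt_succ_self n)
        simp only [sub_nonneg]; exact this
      · intro i j hij hj
        have h1 : min i n ≤ min j n := by omega
        have := hanti (min i n) (min j n) h1 (by omega)
        linarith
      · intro j hj; exact hp j (by omega)
    have e1 : ∑ i ∈ range (n+1), c i * e i
        = ∑ i ∈ range n, (c (min i n) - c n) * e i + c n * ∑ i ∈ range (n+1), e i := by
      have h5 : ∀ i ∈ range n, (c (min i n) - c n) * e i = c i * e i - c n * e i := by
        intro i hi
        rw [Finset.mem_range] at hi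
        rw [min_eq_left hi.le]; ring
      rw [Finset.sum_range_succ (fun i => c i * e i), Finset.sum_range_succ e,
        Finset.sum_congr rfl h5, Finset.sum_sub_distrib, ← Finset.mul_sum]
      ring
    rw [e1]
    have h2 : c n * ∑ i ∈ range (n+1), e i ≤ 0 :=
      mul_nonpos_of_nonneg_of_nonpos (hc n (Nat.lt_succ_self n)) (hp (n+1) le_rfl)
    have key' : ∑ i ∈ range n, (c (min i n) - c n) * e i ≤ 0 := key
    linarith

-- cardinality of the initial-segment filter
lemma ht_card_filter (d j : ℕ) (hj : j ≤ d) :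
    (Finset.univ.filter (fun k : Fin d => (k : ℕ) < j)).card = j := by
  have h : (Finset.univ : Finset (Fin j)).card
      = (Finset.univ.filter (fun k : Fin d => (k : ℕ) < j)).card := by
    apply Finset.card_bij
      (fun (a : Fin j) (_ : a ∈ Finset.univ) => (⟨(a : ℕ), lt_of_lt_of_le a.isLt hj⟩ : Fin d))
    · intro a ha
      simp only [Finset.mem_filter]
      exact ⟨Finset.mem_univ _, a.isLt⟩
    · intro a1 h1 a2 h2 heq
      have := congrArg Fin.val heq
      simp only [Fin.val_mk] at this
      exact Fin.ext this
    · intro b hb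
      simp only [Finset.mem_filter] at hb
      exact ⟨⟨(b : ℕ), hb.2⟩, Finset.mem_univ _, rfl⟩
  rw [← h, Finset.card_univ, Fintype.card_fin]

-- sum over initial-segment filter equals sum over range of the ℕ-extension
lemma ht_sum_filter_eq (d j : ℕ) (hj : j ≤ d) (f : Fin d → ℝ) :
    ∑ k ∈ Finset.univ.filter (fun k : Fin d => (k : ℕ) < j), f k
      = ∑ i ∈ range j, (fun i => if h : i < d then f ⟨i, h⟩ else 0) i := by
  rw [Finset.sum_filter]
  have h1 : ∑ a : Fin d, (if (a : ℕ) < j then f a else 0)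
      = ∑ i ∈ range d, (fun i => if h : i < d then (if i < j then f ⟨i, h⟩ else 0) else 0) i := by
    rw [← Fin.sum_univ_eq_sum_range]
    apply Finset.sum_congr rfl
    intro a _
    simp [a.isLt]
  rw [h1, ← Finset.sum_subset (Finset.range_subset_range.mpr hj)]
  · apply Finset.sum_congr rfl
    intro i hi
    rw [Finset.mem_range] at hi
    simp [hi, Nat.lt_of_lt_of_le hi hj]
  · intro x _ hxj
    rw [Finset.mem_range] at hxj
    simp [hxj]

-- Ky Fan scalar lemma
lemma ht_kyfan_scalar (d : ℕ) (lam α : Fin d → ℝ)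
    (hnn : ∀ k, 0 ≤ lam k) (hsort : ∀ i j : Fin d, i ≤ j → lam j ≤ lam i)
    (hα0 : ∀ i, 0 ≤ α i) (hα1 : ∀ i, α i ≤ 1) (j : ℕ) (hj : j ≤ d)
    (hαs : ∑ i, α i = (j : ℝ)) :
    ∑ i, lam i * α i ≤ ∑ i ∈ Finset.univ.filter (fun k : Fin d => (k : ℕ) < j), lam i := by
  set F := Finset.univ.filter (fun k : Fin d => (k : ℕ) < j) with hF
  rcases lt_or_ge j d with hjd | hjd
  · set t := lam ⟨j, hjd⟩ with ht
    have ht0 : 0 ≤ t := hnn _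
    have hsplit : ∑ i, lam i * α i = ∑ i ∈ F, lam i * α i + ∑ i ∈ Fᶜ, lam i * α i :=
      (Finset.sum_add_sum_compl F _).symm
    have hαsplit : ∑ i ∈ F, α i + ∑ i ∈ Fᶜ, α i = (j : ℝ) := by
      rw [Finset.sum_add_sum_compl]; exact hαs
    have hcard : ((F.card : ℕ) : ℝ) = (j : ℝ) := by
      rw [hF, ht_card_filter d j hj]
    have h1 : ∑ i ∈ F, lam i * α i ≤ ∑ i ∈ F, (lam i + t * (α i - 1)) := by
      apply Finset.sum_le_sum
      intro i hi
      rw [hF, Finset.mem_filter] at hi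
      have hlt : lam ⟨j, hjd⟩ ≤ lam i := hsort i ⟨j, hjd⟩ (by
        rw [Fin.le_def]; exact Nat.le_of_lt hi.2)
      nlinarith [hα1 i, hα0 i]
    have h2 : ∑ i ∈ Fᶜ, lam i * α i ≤ ∑ i ∈ Fᶜ, t * α i := by
      apply Finset.sum_le_sum
      intro i hi
      rw [hF, Finset.compl_filter, Finset.mem_filter] at hi
      have h5 : ¬ (i : ℕ) < j := hi.2
      have hge : lam i ≤ t := hsort ⟨j, hjd⟩ i (by
        rw [Fin.le_def]; exact Nat.le_of_not_lt h5)
      nlinarith [hα0 i]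
    have h3a : ∑ i ∈ F, t * (α i - 1) = t * ∑ i ∈ F, (α i - 1) := (Finset.mul_sum _ _ _).symm
    have h3b : ∑ i ∈ F, (α i - 1) = ∑ i ∈ F, α i - F.card := by
      rw [Finset.sum_sub_distrib]; simp
    have h3 : ∑ i ∈ F, (lam i + t * (α i - 1))
        = ∑ i ∈ F, lam i + t * (∑ i ∈ F, α i - F.card) := by
      rw [Finset.sum_add_distrib, h3a, h3b]
    have h4 : ∑ i ∈ Fᶜ, t * α i = t * ∑ i ∈ Fᶜ, α i := (Finset.mul_sum _ _ _).symm
    have h6 : ∑ i ∈ Fᶜ, α i = (j : ℝ) - ∑ i ∈ F, α i := by linarith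
    calc ∑ i, lam i * α i
        ≤ (∑ i ∈ F, lam i + t * (∑ i ∈ F, α i - F.card)) + t * ∑ i ∈ Fᶜ, α i := by
          rw [hsplit, ← h3, ← h4]; exact add_le_add h1 h2
      _ = ∑ i ∈ F, lam i := by rw [h6, hcard]; ring
  · have hFu : F = Finset.univ := by
      rw [hF]
      apply Finset.filter_true_of_mem
      intro i _
      exact Nat.lt_of_lt_of_le i.isLt hjd
    rw [hFu]
    apply Finset.sum_le_sum
    intro i _
    nlinarith [hα1 i, hα0 i, hnn i]

-- HLP-type inequality from sorted sequences and partial-sum domination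
lemma ht_hlp (v : ℝ) (hv : 0 < v) (m : ℕ) (s' lamN : ℕ → ℝ)
    (hdesc : ∀ i j, i ≤ j → j < m → s' j ≤ s' i)
    (hpart : ∀ j ≤ m, ∑ i ∈ range j, s' i ≤ ∑ i ∈ range j, lamN i) :
    ∑ i ∈ range m, htG v (s' i) ≤ ∑ i ∈ range m, htG v (lamN i) := by
  have key : ∑ i ∈ range m, (htGd v (s' i)) * (s' i - lamN i) ≤ 0 := by
    apply ht_abel m
    · intro i _; exact htGd_nonneg hv _
    · intro i j hij hj
      exact htGd_mono hv (hdesc i j hij hj)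
    · intro j hj
      rw [Finset.sum_sub_distrib]
      have := hpart j hj
      linarith
  have h1 : ∑ i ∈ range m, (htG v (s' i) - htG v (lamN i))
      ≤ ∑ i ∈ range m, (htGd v (s' i)) * (s' i - lamN i) := by
    apply Finset.sum_le_sum
    intro i _
    have := htG_grad hv (s' i) (lamN i)
    nlinarith []
  rw [Finset.sum_sub_distrib] at h1
  linarith

-- sorted rearrangement of the values of s on a finset A
lemma ht_sorted (d : ℕ) (A : Finset (Fin d)) (s : Fin d → ℝ) :
    ∃ s' : ℕ → ℝ,
      (∀ i j, i ≤ j → j < A.card → s' j ≤ s' i) ∧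
      (∀ f : ℝ → ℝ, ∑ i ∈ range A.card, f (s' i) = ∑ k ∈ A, f (s k)) ∧
      (∀ j ≤ A.card, ∃ B ⊆ A, B.card = j ∧ ∑ i ∈ range j, s' i = ∑ k ∈ B, s k) := by
  classical
  set m := A.card with hm
  set e : Fin m ≃ {x // x ∈ A} := A.equivFin.symm with he
  set t : Fin m → ℝ := fun i => s (e i) with htdef
  set sperm : Equiv.Perm (Fin m) := Tuple.sort t with hsperm
  have hmono : Monotone (t ∘ sperm) := Tuple.monotone_sort t
  refine ⟨fun i => if h : i < m then t (sperm ((⟨i, h⟩ : Fin m).rev)) else 0, ?_, ?_, ?_⟩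
  · intro i j hij hj
    have hi : i < m := lt_of_le_of_lt hij hj
    simp only [dif_pos hi, dif_pos hj]
    apply hmono
    rw [Fin.rev_le_rev]
    exact hij
  · intro f
    have h1 : ∑ i ∈ range m, f ((fun i => if h : i < m then t (sperm ((⟨i, h⟩ : Fin m).rev)) else 0) i)
        = ∑ i : Fin m, f (t (sperm i.rev)) := by
      rw [← Fin.sum_univ_eq_sum_range (fun i => f (if h : i < m then t (sperm ((⟨i, h⟩ : Fin m).rev)) else 0)) m]
      apply Finset.sum_congr rfl
      intro a _
      simp [a.isLt]
    rw [h1]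
    have h2 : ∑ i : Fin m, f (t (sperm i.rev)) = ∑ i : Fin m, f (t (sperm i)) :=
      Equiv.sum_comp (Fin.revPerm) (fun i => f (t (sperm i)))
    have h3 : ∑ i : Fin m, f (t (sperm i)) = ∑ i : Fin m, f (t i) :=
      Equiv.sum_comp sperm (fun i => f (t i))
    rw [h2, h3, htdef]
    have h4 : ∑ i : Fin m, f (s (e i)) = ∑ x : {x // x ∈ A}, f (s x) :=
      Equiv.sum_comp e (fun x : {x // x ∈ A} => f (s x))
    rw [h4]
    exact Finset.sum_coe_sort A (fun k => f (s k))
  · intro j hj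
    set emb : Fin j → Fin d :=
      fun i => ↑(e (sperm ((⟨(i : ℕ), lt_of_lt_of_le i.isLt hj⟩ : Fin m).rev))) with hemb
    have hinj : Function.Injective emb := by
      intro i1 i2 h12
      rw [hemb] at h12
      have h13 := Subtype.coe_injective h12
      have h14 := e.injective h13
      have h15 := sperm.injective h14
      have h16 := Fin.rev_injective h15
      have h17 := congrArg Fin.val h16
      simp only [Fin.val_mk] at h17
      exact Fin.ext h17
    refine ⟨Finset.image emb Finset.univ, ?_, ?_, ?_⟩
    · intro x hx
      rw [Finset.mem_image] at hx
      obtain ⟨i, _, rfl⟩ := hx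
      exact (e (sperm ((⟨(i : ℕ), lt_of_lt_of_le i.isLt hj⟩ : Fin m).rev))).2
    · rw [Finset.card_image_of_injective _ hinj, Finset.card_univ, Fintype.card_fin]
    · rw [Finset.sum_image (fun a _ b _ h => hinj h)]
      have h1 : ∑ i ∈ range j, (fun i => if h : i < m then t (sperm ((⟨i, h⟩ : Fin m).rev)) else 0) i
          = ∑ i : Fin j, t (sperm ((⟨(i : ℕ), lt_of_lt_of_le i.isLt hj⟩ : Fin m).rev)) := by
        rw [← Fin.sum_univ_eq_sum_range
          (fun i => if h : i < m then t (sperm ((⟨i, h⟩ : Fin m).rev)) else 0) j]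
        apply Finset.sum_congr rfl
        intro a _
        simp only [dif_pos (lt_of_lt_of_le a.isLt hj)]
      rw [h1]

lemma ht_main_ineq (d l : ℕ) (hl : l ≤ d) (v : ℝ) (hv : 0 < v)
    (lam : Fin d → ℝ) (s : Fin d → ℝ) (A : Finset (Fin d)) (hcard : A.card ≤ l)
    (hky : ∀ B : Finset (Fin d), B ⊆ A → ∑ k ∈ B, s k
      ≤ ∑ i ∈ Finset.univ.filter (fun k : Fin d => (k : ℕ) < B.card), lam i) :
    ∑ k ∈ A, htG v (s k)
      ≤ ∑ i ∈ Finset.univ.filter (fun k : Fin d => (k : ℕ) < l), htG v (lam i) := by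
  classical
  set lamN : ℕ → ℝ := fun i => if h : i < d then lam ⟨i, h⟩ else 0 with hlamN
  obtain ⟨s', hdesc, hsum, hpartB⟩ := ht_sorted d A s
  set m := A.card with hm
  have hmd : m ≤ d := le_trans hcard hl
  have hpart : ∀ j ≤ m, ∑ i ∈ range j, s' i ≤ ∑ i ∈ range j, lamN i := by
    intro j hj
    obtain ⟨B, hBA, hBc, hBs⟩ := hpartB j hj
    rw [hBs]
    have hky' := hky B hBA
    rw [hBc] at hky'
    rw [ht_sum_filter_eq d j (le_trans hj hmd) lam] at hky'
    exact hky'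
  have main := ht_hlp v hv m s' lamN hdesc hpart
  rw [hsum (htG v)] at main
  have h2 : ∑ i ∈ range m, htG v (lamN i) ≤ ∑ i ∈ range l, htG v (lamN i) := by
    apply Finset.sum_le_sum_of_subset_of_nonneg (Finset.range_subset_range.mpr hcard)
    intro i _ _
    exact htG_nonneg hv _
  have h3 : ∑ i ∈ range l, htG v (lamN i)
      = ∑ i ∈ Finset.univ.filter (fun k : Fin d => (k : ℕ) < l), htG v (lam i) := by
    rw [ht_sum_filter_eq d l hl (fun k => htG v (lam k))]
    apply Finset.sum_congr rfl
    intro i hi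
    rw [Finset.mem_range] at hi
    have hid : i < d := lt_of_lt_of_le hi hl
    simp only [hlamN, dif_pos hid]
  linarith

section MatrixLemmas

open Matrix

variable {d : ℕ}

lemma ht_VtV (V : Matrix (Fin d) (Fin d) ℝ) (hV : V * Vᵀ = 1) : Vᵀ * V = 1 :=
  mul_eq_one_comm.mp hV

lemma ht_diag_entry (V S : Matrix (Fin d) (Fin d) ℝ) (k : Fin d) :
    (Vᵀ * S * V) k k = (fun i => V i k) ⬝ᵥ (S *ᵥ (fun i => V i k)) := by
  simp only [Matrix.mul_apply, Matrix.transpose_apply, dotProduct, Matrix.mulVec,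
    Finset.sum_mul, Finset.mul_sum]
  rw [Finset.sum_comm]
  apply Finset.sum_congr rfl
  intro i _
  apply Finset.sum_congr rfl
  intro j _
  ring

lemma ht_entry_nonneg (V S : Matrix (Fin d) (Fin d) ℝ) (hS : S.PosSemidef) (k : Fin d) :
    0 ≤ (Vᵀ * S * V) k k := by
  rw [ht_diag_entry]
  have := hS.dotProduct_mulVec_nonneg (fun i => V i k)
  simpa using this

lemma ht_posdef_conj (V D : Matrix (Fin d) (Fin d) ℝ) (hV : V * Vᵀ = 1) (hD : D.PosDef) :
    (V * D * Vᵀ).PosDef := by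
  refine Matrix.PosDef.of_dotProduct_mulVec_pos ?_ ?_
  · have h1 : (V * D * Vᵀ)ᴴ = V * Dᴴ * Vᵀ := by
      rw [Matrix.conjTranspose_eq_transpose_of_trivial, Matrix.transpose_mul,
        Matrix.transpose_mul, Matrix.transpose_transpose,
        ← Matrix.conjTranspose_eq_transpose_of_trivial D, Matrix.mul_assoc]
    show (V * D * Vᵀ)ᴴ = V * D * Vᵀ
    rw [h1, hD.1.eq]
  · intro x hx
    have hy : V *ᵥ (Vᵀ *ᵥ x) = x := by
      rw [Matrix.mulVec_mulVec, hV, Matrix.one_mulVec]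
    have hyne : Vᵀ *ᵥ x ≠ 0 := by
      intro h
      rw [h, Matrix.mulVec_zero] at hy
      exact hx hy.symm
    have key := hD.dotProduct_mulVec_pos hyne
    have heq : star x ⬝ᵥ (V * D * Vᵀ) *ᵥ x = star (Vᵀ *ᵥ x) ⬝ᵥ D *ᵥ (Vᵀ *ᵥ x) := by
      simp only [star_trivial]
      rw [← Matrix.mulVec_mulVec, ← Matrix.mulVec_mulVec]
      rw [Matrix.dotProduct_mulVec x V, Matrix.mulVec_transpose]
    rw [heq]
    exact key

lemma ht_trace_conj (V : Matrix (Fin d) (Fin d) ℝ) (c : Fin d → ℝ)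
    (S : Matrix (Fin d) (Fin d) ℝ) :
    (V * Matrix.diagonal c * Vᵀ * S).trace = ∑ k, c k * (Vᵀ * S * V) k k := by
  rw [Matrix.mul_assoc (V * Matrix.diagonal c) Vᵀ S, Matrix.trace_mul_comm,
    ← Matrix.mul_assoc (Vᵀ * S) V (Matrix.diagonal c), Matrix.trace_mul_comm]
  simp only [Matrix.trace, Matrix.diag, Matrix.diagonal_mul]

lemma ht_det_conj (V D : Matrix (Fin d) (Fin d) ℝ) (hV : V * Vᵀ = 1) :
    (V * D * Vᵀ).det = D.det := by
  have h1 : V.det * Vᵀ.det = 1 := by rw [← Matrix.det_mul, hV, Matrix.det_one]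
  rw [Matrix.det_mul, Matrix.det_mul]
  linear_combination D.det * h1

lemma ht_sub_form (V : Matrix (Fin d) (Fin d) ℝ) (hV : V * Vᵀ = 1) (a : ℝ) (w : Fin d → ℝ) :
    a • (1 : Matrix (Fin d) (Fin d) ℝ) - V * Matrix.diagonal w * Vᵀ
      = V * Matrix.diagonal (fun k => a - w k) * Vᵀ := by
  have h1 : a • (1 : Matrix (Fin d) (Fin d) ℝ) = V * (a • (1:Matrix (Fin d) (Fin d) ℝ)) * Vᵀ := by
    rw [Matrix.mul_smul, Matrix.mul_one, Matrix.smul_mul, hV]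
  rw [h1, ← Matrix.sub_mul, ← Matrix.mul_sub]
  congr 1
  congr 1
  rw [Matrix.smul_one_eq_diagonal, ← Matrix.diagonal_sub]

lemma ht_trace_total (V S : Matrix (Fin d) (Fin d) ℝ) (hV : V * Vᵀ = 1) :
    ∑ k, (Vᵀ * S * V) k k = S.trace := by
  have h1 : ∑ k, (Vᵀ * S * V) k k = (Vᵀ * S * V).trace := rfl
  rw [h1, Matrix.trace_mul_cycle, hV, Matrix.one_mul]

lemma ht_kyfan_matrix (U V : Matrix (Fin d) (Fin d) ℝ) (hU : U * Uᵀ = 1) (hV : V * Vᵀ = 1)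
    (lam : Fin d → ℝ) (hnn : ∀ k, 0 ≤ lam k) (hsort : ∀ i j : Fin d, i ≤ j → lam j ≤ lam i)
    (B : Finset (Fin d)) :
    ∑ k ∈ B, (Vᵀ * (U * Matrix.diagonal lam * Uᵀ) * V) k k
      ≤ ∑ i ∈ Finset.univ.filter (fun k : Fin d => (k : ℕ) < B.card), lam i := by
  classical
  set M : Matrix (Fin d) (Fin d) ℝ := Vᵀ * U with hM
  have hMt : Mᵀ = Uᵀ * V := by
    rw [hM, Matrix.transpose_mul, Matrix.transpose_transpose]
  have hMMt : M * Mᵀ = 1 := by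
    rw [hM, hMt, Matrix.mul_assoc, ← Matrix.mul_assoc U, hU, Matrix.one_mul, ht_VtV V hV]
  have hMtM : Mᵀ * M = 1 := mul_eq_one_comm.mp hMMt
  have hconj : Vᵀ * (U * Matrix.diagonal lam * Uᵀ) * V = M * Matrix.diagonal lam * Mᵀ := by
    rw [hM, hMt]
    simp only [Matrix.mul_assoc]
  have entry : ∀ k, (Vᵀ * (U * Matrix.diagonal lam * Uᵀ) * V) k k
      = ∑ i, lam i * (M k i) ^ 2 := by
    intro k
    rw [hconj, Matrix.mul_apply]
    simp only [Matrix.mul_diagonal, Matrix.transpose_apply]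
    apply Finset.sum_congr rfl
    intro i _
    ring
  set α : Fin d → ℝ := fun i => ∑ k ∈ B, (M k i) ^ 2 with hα
  have hα0 : ∀ i, 0 ≤ α i := fun i => Finset.sum_nonneg (fun k _ => sq_nonneg _)
  have hα1 : ∀ i, α i ≤ 1 := by
    intro i
    have h2 : α i ≤ ∑ k, (M k i) ^ 2 :=
      Finset.sum_le_sum_of_subset_of_nonneg (Finset.subset_univ B) (fun k _ _ => sq_nonneg _)
    have h3 : ∑ k, (M k i) ^ 2 = (Mᵀ * M) i i := by
      simp only [Matrix.mul_apply, Matrix.transpose_apply]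
      apply Finset.sum_congr rfl
      intro k _
      ring
    rw [h3, hMtM, Matrix.one_apply_eq] at h2
    exact h2
  have hαs : ∑ i, α i = (B.card : ℝ) := by
    rw [hα]
    rw [Finset.sum_comm]
    have h4 : ∀ k ∈ B, ∑ i, (M k i) ^ 2 = 1 := by
      intro k _
      have h5 : ∑ i, (M k i) ^ 2 = (M * Mᵀ) k k := by
        simp only [Matrix.mul_apply, Matrix.transpose_apply]
        apply Finset.sum_congr rfl
        intro i _
        ring
      rw [h5, hMMt, Matrix.one_apply_eq]
    rw [Finset.sum_congr rfl h4]
    simp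
  have hsum : ∑ k ∈ B, (Vᵀ * (U * Matrix.diagonal lam * Uᵀ) * V) k k = ∑ i, lam i * α i := by
    rw [Finset.sum_congr rfl (fun k _ => entry k), Finset.sum_comm]
    apply Finset.sum_congr rfl
    intro i _
    rw [hα, Finset.mul_sum]
  rw [hsum]
  exact ht_kyfan_scalar d lam α hnn hsort hα0 hα1 B.card
    (by simpa using Finset.card_le_univ B) hαs

end MatrixLemmas

/-- Hard thresholding: with `S̃ = Ũ Λ̃ Ũᵀ` PSD (eigenvalues sorted decreasingly) and
noise level `σ² > 0`, the minimizer of `f(C) = -log det C + trace(C S̃)` over positive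
definite `C = (1/σ²)I - W₀` with `W₀ ⪰ 0` and `rank W₀ ≤ l` is
`Ĉ = Ũ((1/σ²)I - D̂)Ũᵀ` where `d̂_k = 1/σ² - 1/λ̃_k` if `k ≤ l` and `λ̃_k > σ²`,
and `d̂_k = 0` otherwise. -/
theorem hard_thresholding_minimizer
    (d l : ℕ) (hl : l ≤ d) (σ : ℝ) (hσ : 0 < σ)
    (S U : Matrix (Fin d) (Fin d) ℝ) (lam : Fin d → ℝ)
    (hS : S.PosSemidef) (hU : U * Uᵀ = 1)
    (hdecomp : S = U * Matrix.diagonal lam * Uᵀ)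
    (hnn : ∀ k, 0 ≤ lam k) (hsort : ∀ i j : Fin d, i ≤ j → lam j ≤ lam i)
    (dhat : Fin d → ℝ)
    (hdhat : ∀ k : Fin d, dhat k =
      if (k : ℕ) < l ∧ σ ^ 2 < lam k then 1 / σ ^ 2 - 1 / lam k else 0)
    (Chat : Matrix (Fin d) (Fin d) ℝ)
    (hChat : Chat = U * Matrix.diagonal (fun k => 1 / σ ^ 2 - dhat k) * Uᵀ) :
    (Chat.PosDef ∧ ∃ W : Matrix (Fin d) (Fin d) ℝ, W.PosSemidef ∧
        Chat = (1 / σ ^ 2) • (1 : Matrix (Fin d) (Fin d) ℝ) - W ∧ W.rank ≤ l) ∧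
    ∀ C W : Matrix (Fin d) (Fin d) ℝ, C.PosDef → W.PosSemidef →
      C = (1 / σ ^ 2) • (1 : Matrix (Fin d) (Fin d) ℝ) - W → W.rank ≤ l →
      -Real.log Chat.det + (Chat * S).trace ≤ -Real.log C.det + (C * S).trace := by
  have hv : (0:ℝ) < σ ^ 2 := by positivity
  set v : ℝ := σ ^ 2 with hvdef
  set chat : Fin d → ℝ := fun k => 1 / v - dhat k with hchatdef
  have hchat_eq : ∀ k, chat k = if (k : ℕ) < l ∧ v < lam k then 1 / lam k else 1 / v := by
    intro k
    rw [hchatdef]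
    simp only [hdhat k]
    split <;> ring
  have hchat_pos : ∀ k, 0 < chat k := by
    intro k
    rw [hchat_eq k]
    split_ifs with h
    · exact one_div_pos.mpr (lt_trans hv h.2)
    · exact one_div_pos.mpr hv
  have hdhat_nonneg : ∀ k, 0 ≤ dhat k := by
    intro k
    rw [hdhat k]
    split_ifs with h
    · have h1 : 1 / lam k ≤ 1 / v := one_div_le_one_div_of_le hv h.2.le
      linarith
    · exact le_rfl
  -- feasibility
  have hChat' : Chat = U * Matrix.diagonal chat * Uᵀ := hChat
  have part1 : Chat.PosDef ∧ ∃ W : Matrix (Fin d) (Fin d) ℝ, W.PosSemidef ∧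
      Chat = (1 / v) • (1 : Matrix (Fin d) (Fin d) ℝ) - W ∧ W.rank ≤ l := by
    constructor
    · rw [hChat']
      exact ht_posdef_conj U _ hU (Matrix.PosDef.diagonal hchat_pos)
    · refine ⟨U * Matrix.diagonal dhat * Uᵀ, ?_, ?_, ?_⟩
      · have h1 : (Matrix.diagonal dhat).PosSemidef :=
          Matrix.posSemidef_diagonal_iff.mpr hdhat_nonneg
        have h2 := h1.mul_mul_conjTranspose_same U
        rwa [Matrix.conjTranspose_eq_transpose_of_trivial] at h2
      · rw [ht_sub_form U hU (1/v) dhat, hChat']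
      · have h1 : (U * Matrix.diagonal dhat * Uᵀ).rank ≤ (Matrix.diagonal dhat).rank :=
          le_trans (Matrix.rank_mul_le_left _ _) (Matrix.rank_mul_le_right _ _)
        have h2 : (Matrix.diagonal dhat).rank = (Finset.univ.filter (fun i : Fin d => dhat i ≠ 0)).card := by
          rw [Matrix.rank_diagonal, Fintype.card_subtype]
        have h3 : (Finset.univ.filter (fun i : Fin d => dhat i ≠ 0)).card
            ≤ (Finset.univ.filter (fun i : Fin d => (i:ℕ) < l)).card := by
          apply Finset.card_le_card
          intro i hi
          rw [Finset.mem_filter] at hi ⊢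
          refine ⟨hi.1, ?_⟩
          by_contra hcon
          apply hi.2
          rw [hdhat i]
          rw [if_neg]
          intro hc
          exact hcon hc.1
        rw [ht_card_filter d l hl] at h3
        omega
  refine ⟨part1, ?_⟩
  intro C W hC hW hCW hrank
  -- spectral decomposition of W
  have hH : W.IsHermitian := hW.1
  set V : Matrix (Fin d) (Fin d) ℝ :=
    (Matrix.IsHermitian.eigenvectorUnitary hH : Matrix (Fin d) (Fin d) ℝ) with hVdef
  set w : Fin d → ℝ := hH.eigenvalues with hwdef
  have hspec : W = V * Matrix.diagonal w * Vᵀ := by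
    have h1 := hH.spectral_theorem
    rw [Unitary.conjStarAlgAut_apply, RCLike.ofReal_real_eq_id, Function.id_comp, Matrix.star_eq_conjTranspose,
      Matrix.conjTranspose_eq_transpose_of_trivial] at h1
    exact h1
  have hVU : V * Vᵀ = 1 := by
    have h2 := (Matrix.mem_unitaryGroup_iff).mp (Matrix.IsHermitian.eigenvectorUnitary hH).2
    rwa [Matrix.star_eq_conjTranspose, Matrix.conjTranspose_eq_transpose_of_trivial] at h2
  have hw0 : ∀ k, 0 ≤ w k := fun k => hW.eigenvalues_nonneg k
  set c : Fin d → ℝ := fun k => 1 / v - w k with hcdef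
  have hCeq : C = V * Matrix.diagonal c * Vᵀ := by
    rw [hCW, hspec, ht_sub_form V hVU]
  have hrecov : Vᵀ * C * V = Matrix.diagonal c := by
    rw [hCeq]
    have h3 : Vᵀ * (V * Matrix.diagonal c * Vᵀ) * V
        = Vᵀ * V * Matrix.diagonal c * (Vᵀ * V) := by
      simp only [Matrix.mul_assoc]
    rw [h3, ht_VtV V hVU, Matrix.one_mul, Matrix.mul_one]
  have hcol : ∀ k, (fun i => V i k) ≠ (0 : Fin d → ℝ) := by
    intro k hcon
    have h4 : (Vᵀ * V) k k = 1 := by rw [ht_VtV V hVU, Matrix.one_apply_eq]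
    have h5 : (Vᵀ * V) k k = ∑ i, V i k * V i k := by
      simp only [Matrix.mul_apply, Matrix.transpose_apply]
    have h6 : ∀ i, V i k = 0 := fun i => congrFun hcon i
    rw [h5] at h4
    simp only [h6, mul_zero, Finset.sum_const_zero] at h4
    exact zero_ne_one h4
  have hcpos : ∀ k, 0 < c k := by
    intro k
    have h7 : 0 < (Vᵀ * C * V) k k := by
      rw [ht_diag_entry]
      have := hC.dotProduct_mulVec_pos (hcol k)
      simpa using this
    rw [hrecov] at h7
    simpa using h7
  have hcle : ∀ k, c k ≤ 1 / v := by
    intro k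
    have := hw0 k
    rw [hcdef]
    dsimp only
    linarith
  -- diagonal values of S in the V basis
  set s : Fin d → ℝ := fun k => (Vᵀ * S * V) k k with hsdef
  have hs0 : ∀ k, 0 ≤ s k := fun k => ht_entry_nonneg V S hS k
  -- support of eigenvalues of W
  set A : Finset (Fin d) := Finset.univ.filter (fun k => w k ≠ 0) with hAdef
  have hcardA : A.card ≤ l := by
    have h8 : W.rank = Fintype.card {i // w i ≠ 0} := hH.rank_eq_card_non_zero_eigs
    rw [Fintype.card_subtype] at h8
    rw [hAdef]
    omega
  -- f(C) formulas
  have hdetC : C.det = ∏ k, c k := by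
    rw [hCeq, ht_det_conj V _ hVU, Matrix.det_diagonal]
  have htrC : (C * S).trace = ∑ k, c k * s k := by
    rw [hCeq, ht_trace_conj]
  have hlogC : Real.log C.det = ∑ k, Real.log (c k) := by
    rw [hdetC, Real.log_prod]
    intro k _
    exact (hcpos k).ne'
  -- per-coordinate lower bound
  have per : ∀ k, htPsi v (s k) - (if k ∈ A then htG v (s k) else 0)
      ≤ -Real.log (c k) + c k * s k := by
    intro k
    by_cases hk : k ∈ A
    · rw [if_pos hk]
      exact htPhi_le hv (hcpos k) (hcle k) (hs0 k)
    · rw [if_neg hk]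
      have hwk : w k = 0 := by
        rw [hAdef, Finset.mem_filter] at hk
        push_neg at hk
        exact hk (Finset.mem_univ k)
      have hck : c k = 1 / v := by
        rw [hcdef]; dsimp only; rw [hwk]; ring
      rw [hck, one_div, Real.log_inv]
      unfold htPsi
      have h9 : v⁻¹ * s k = s k / v := by rw [div_eq_mul_inv]; ring
      rw [h9]
      linarith
  have lower : ∑ k, htPsi v (s k) - ∑ k ∈ A, htG v (s k)
      ≤ -Real.log C.det + (C * S).trace := by
    rw [hlogC, htrC]
    have h9 : -∑ k, Real.log (c k) + ∑ k, c k * s k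
        = ∑ k, (-Real.log (c k) + c k * s k) := by
      rw [Finset.sum_add_distrib, Finset.sum_neg_distrib]
    rw [h9]
    have h10 : ∑ k ∈ A, htG v (s k) = ∑ k, (if k ∈ A then htG v (s k) else 0) := by
      rw [Finset.sum_ite_mem, Finset.univ_inter]
    rw [h10, ← Finset.sum_sub_distrib]
    exact Finset.sum_le_sum (fun k _ => per k)
  -- total psi sums agree
  have hsum_s : ∑ k, s k = ∑ k, lam k := by
    have h11 := ht_trace_total V S hVU
    have h12 : S.trace = ∑ k, lam k := by
      rw [hdecomp, Matrix.trace_mul_cycle, ht_VtV U hU, Matrix.one_mul, Matrix.trace_diagonal]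
    rw [hsdef]
    dsimp only
    rw [h11, h12]
  have hpsi_eq : ∑ k, htPsi v (s k) = ∑ k, htPsi v (lam k) := by
    unfold htPsi
    rw [Finset.sum_add_distrib, Finset.sum_add_distrib, ← Finset.sum_div, ← Finset.sum_div,
      hsum_s]
  -- the key majorization inequality
  have hmain : ∑ k ∈ A, htG v (s k)
      ≤ ∑ i ∈ Finset.univ.filter (fun k : Fin d => (k : ℕ) < l), htG v (lam i) := by
    apply ht_main_ineq d l hl v hv lam s A hcardA
    intro B _
    have h13 := ht_kyfan_matrix U V hU hVU lam hnn hsort B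
    rw [hsdef]
    dsimp only
    rw [hdecomp]
    exact h13
  -- f(Chat) formulas
  have hUtU : Uᵀ * U = 1 := ht_VtV U hU
  have hdetChat : Chat.det = ∏ k, chat k := by
    rw [hChat, ht_det_conj U _ hU, Matrix.det_diagonal]
  have hlogChat : Real.log Chat.det = ∑ k, Real.log (chat k) := by
    rw [hdetChat, Real.log_prod]
    intro k _
    exact (hchat_pos k).ne'
  have htrChat : (Chat * S).trace = ∑ k, chat k * lam k := by
    rw [hChat, ht_trace_conj]
    apply Finset.sum_congr rfl
    intro k _
    congr 1
    rw [hdecomp]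
    have h14 : Uᵀ * (U * Matrix.diagonal lam * Uᵀ) * U
        = Uᵀ * U * Matrix.diagonal lam * (Uᵀ * U) := by
      simp only [Matrix.mul_assoc]
    rw [h14, hUtU, Matrix.one_mul, Matrix.mul_one, Matrix.diagonal_apply_eq]
  have perhat : ∀ k, -Real.log (chat k) + chat k * lam k
      = htPsi v (lam k) - (if (k : ℕ) < l then htG v (lam k) else 0) := by
    intro k
    rw [hchat_eq k]
    by_cases hcond : (k : ℕ) < l ∧ v < lam k
    · rw [if_pos hcond, if_pos hcond.1]
      have hlk : 0 < lam k := lt_trans hv hcond.2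
      rw [htG_of_ge hv hcond.2.le]
      unfold htPsi
      rw [one_div, Real.log_inv]
      have h15 : (lam k)⁻¹ * lam k = 1 := inv_mul_cancel₀ hlk.ne'
      rw [h15]
      ring
    · rw [if_neg hcond]
      have hg : (if (k : ℕ) < l then htG v (lam k) else 0) = 0 := by
        split_ifs with hkl
        · have h16 : ¬ v < lam k := fun hvl => hcond ⟨hkl, hvl⟩
          exact htG_of_le hv (le_of_not_gt h16)
        · rfl
      rw [hg, one_div, Real.log_inv]
      unfold htPsi
      have h17 : v⁻¹ * lam k = lam k / v := by rw [div_eq_mul_inv]; ring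
      rw [h17]
      ring
  have hfhat : -Real.log Chat.det + (Chat * S).trace
      = ∑ k, htPsi v (lam k)
        - ∑ i ∈ Finset.univ.filter (fun k : Fin d => (k : ℕ) < l), htG v (lam i) := by
    rw [hlogChat, htrChat]
    have h18 : -∑ k, Real.log (chat k) + ∑ k, chat k * lam k
        = ∑ k, (-Real.log (chat k) + chat k * lam k) := by
      rw [Finset.sum_add_distrib, Finset.sum_neg_distrib]
    rw [h18, Finset.sum_congr rfl (fun k _ => perhat k), Finset.sum_sub_distrib,
      ← Finset.sum_filter]
  rw [hfhat]
  linarith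
end

section
/- Let τ be defined by the trace-matching condition Σ_{k=1}^d [(λ̃_k − τ − σ²)₊ + σ²] = Σ_{k=1}^d λ̃_k, assuming Σ_k λ̃_k ≥ dσ² and at least one λ̃_k > σ². Then τ is unique on the interval where at least one eigenvalue exceeds τ + σ², and the soft-thresholded estimates λ̂_k = (λ̃_k − τ − σ²)₊ + σ² satisfy λ̂_k ≤ max(λ̃_k, σ²) for all k, with strict inequality λ̂_k < λ̃_k for every k with λ̃_k > τ + σ² when τ > 0. -/
open Real

/-- Uniqueness of the trace-matching parameter `τ` and comparison of the
soft-thresholded estimates with the hard-thresholded ones. Assuming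
`Σ_k λ̃_k ≥ dσ²` and at least one `λ̃_k > σ²`: any two `τ, τ' ≥ 0` satisfying the
trace-matching condition and such that at least one eigenvalue exceeds the
threshold (`λ̃_k > τ + σ²`) must coincide; moreover for any such `τ`, the soft
estimates `λ̂_k = (λ̃_k - τ - σ²)₊ + σ²` satisfy `λ̂_k ≤ max(λ̃_k, σ²)` for all
`k`, and if `τ > 0` then `λ̂_k < λ̃_k` for every `k` with `λ̃_k > τ + σ²`. -/
theorem trace_matching_uniqueness
    (d : ℕ) (σ : ℝ) (hσ : 0 < σ) (lam : Fin d → ℝ)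
    (hsort : ∀ i j : Fin d, i ≤ j → lam j ≤ lam i) (hnn : ∀ k, 0 ≤ lam k)
    (htot : (d : ℝ) * σ ^ 2 ≤ ∑ k, lam k) (hspike : ∃ k, σ ^ 2 < lam k) :
    (∀ τ τ' : ℝ, 0 ≤ τ → 0 ≤ τ' →
      (∑ k, (max (lam k - τ - σ ^ 2) 0 + σ ^ 2)) = ∑ k, lam k →
      (∑ k, (max (lam k - τ' - σ ^ 2) 0 + σ ^ 2)) = ∑ k, lam k →
      (∃ k, τ + σ ^ 2 < lam k) → (∃ k, τ' + σ ^ 2 < lam k) → τ = τ') ∧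
    (∀ τ : ℝ, 0 ≤ τ →
      (∑ k, (max (lam k - τ - σ ^ 2) 0 + σ ^ 2)) = ∑ k, lam k →
      (∀ k, max (lam k - τ - σ ^ 2) 0 + σ ^ 2 ≤ max (lam k) (σ ^ 2)) ∧
      (0 < τ → ∀ k, τ + σ ^ 2 < lam k →
        max (lam k - τ - σ ^ 2) 0 + σ ^ 2 < lam k)) := by

  constructor
  · -- uniqueness
    have key : ∀ τ τ' : ℝ, τ < τ' →
        (∃ k, τ' + σ ^ 2 < lam k) →
        (∑ k, (max (lam k - τ' - σ ^ 2) 0 + σ ^ 2)) <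
          (∑ k, (max (lam k - τ - σ ^ 2) 0 + σ ^ 2)) := by
      intro τ τ' hlt ⟨k, hk⟩
      apply Finset.sum_lt_sum
      · intro i _
        have h : lam i - τ' - σ ^ 2 ≤ lam i - τ - σ ^ 2 := by linarith
        have := max_le_max h (le_refl (0:ℝ))
        linarith
      · exact ⟨k, Finset.mem_univ k, by
          have h1 : max (lam k - τ' - σ ^ 2) 0 = lam k - τ' - σ ^ 2 :=
            max_eq_left (by linarith)
          have h2 : max (lam k - τ - σ ^ 2) 0 = lam k - τ - σ ^ 2 :=
            max_eq_left (by linarith)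
          rw [h1, h2]; linarith⟩
    intro τ τ' hτ hτ' h1 h2 he he'
    rcases lt_trichotomy τ τ' with h | h | h
    · exfalso; have := key τ τ' h he'; rw [h1, h2] at this; exact lt_irrefl _ this
    · exact h
    · exfalso; have := key τ' τ h he; rw [h1, h2] at this; exact lt_irrefl _ this
  · intro τ hτ _
    refine ⟨fun k => ?_, fun hτpos k hk => ?_⟩
    · rcases le_or_gt (lam k - τ - σ ^ 2) 0 with h | h
      · rw [max_eq_right h]; simp
      · rw [max_eq_left h.le]
        have : lam k - τ ≤ lam k := by linarith
        exact le_trans (by linarith) (le_max_left _ _)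
    · have h : 0 ≤ lam k - τ - σ ^ 2 := by linarith
      rw [max_eq_left h]; linarith
end
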